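/- arXiv:2312.07375 — 7 statements merged into one kernel-verified Lean document; each statement's English description precedes it below -/
import Mathlib

section
/- Let Λ ≤ (ℝ_{>0},·), Γ a Z·Λ-submodule of ℝ, and ℓ ∈ Γ with ℓ > 0. Every element f of V(Γ,Λ,ℓ) factors uniquely as f = g·h where h ∈ F(Γ,Λ,ℓ) (the subgroup of increasing continuous elements) and g ∈ IE(Γ,ℓ) (the subgroup of elements with derivative 1 wherever differentiable, i.e. interval exchanges with translation parts in Γ). That is, V(Γ,Λ,ℓ) = IE(Γ,ℓ) · F(Γ,Λ,ℓ) with unique factorization (a Zappa–Szép product). -/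
open Set

/-- `f` is an element of Stein's group `V(Γ,Λ,ℓ)`: a (right-continuous) piecewise linear
bijection of `(0,ℓ]` with finitely many slopes, all in `Λ`, and finitely many
nondifferentiable/discontinuity points, all in `Γ`: there is a partition
`0 = x₀ < x₁ < ⋯ < x_n = ℓ` with breakpoints in `Γ` such that on each `(xᵢ, xᵢ₊₁]`,
`f(t) = μᵢ t + cᵢ` with `μᵢ ∈ Λ` and `cᵢ ∈ Γ`. -/
def IsSteinV (Γ Λ : Set ℝ) (ℓ : ℝ) (f : ℝ → ℝ) : Prop :=
  Set.BijOn f (Ioc 0 ℓ) (Ioc 0 ℓ) ∧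
  ∃ (n : ℕ) (x μ c : ℕ → ℝ), 0 < n ∧ x 0 = 0 ∧ x n = ℓ ∧
    (∀ i < n, x i < x (i + 1)) ∧ (∀ i ≤ n, x i ∈ Γ) ∧
    (∀ i < n, μ i ∈ Λ ∧ c i ∈ Γ) ∧
    (∀ i < n, ∀ t ∈ Ioc (x i) (x (i + 1)), f t = μ i * t + c i)

/-- `f ∈ F(Γ,Λ,ℓ)`: an increasing continuous element of `V(Γ,Λ,ℓ)`. -/
def IsSteinF (Γ Λ : Set ℝ) (ℓ : ℝ) (f : ℝ → ℝ) : Prop :=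
  IsSteinV Γ Λ ℓ f ∧ StrictMonoOn f (Ioc 0 ℓ) ∧ ContinuousOn f (Ioc 0 ℓ)

/-- `f ∈ IE(Γ,ℓ)`: an interval exchange, i.e. an element of `V` all of whose slopes are `1`
(a piecewise translation with translation parts in `Γ`). -/
def IsSteinIE (Γ : Set ℝ) (ℓ : ℝ) (f : ℝ → ℝ) : Prop :=
  IsSteinV Γ {(1:ℝ)} ℓ f

/-! A piecewise affine injection scales Lebesgue measure by its slope on each piece. Hence an
element `f` of `V` with slope `μᵢ` on `(xᵢ, xᵢ₊₁]`, being a bijection of `(0, ℓ]`, satisfies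
`∑ μᵢ (xᵢ₊₁ - xᵢ) = ℓ`, so the continuous map `h` with `h 0 = 0` and slope `μᵢ` on
`(xᵢ, xᵢ₊₁]` lies in `F`, and `g = f ∘ h⁻¹` has slope `1` on each `(h xᵢ, h xᵢ₊₁]`, so lies
in `IE`. For uniqueness: an interval exchange preserves Lebesgue measure, so in any factorisation
`f = g ∘ h` the increasing factor is forced: `h t` is the measure of `f '' (0, t]`. -/

open MeasureTheory

lemma bijOn_Ioc_of_strictMonoOn {α β : Type*} [ConditionallyCompleteLinearOrder α]
    [DenselyOrdered α] [TopologicalSpace α] [OrderTopology α] [LinearOrder β] [TopologicalSpace β]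
    [OrderClosedTopology β] {f : α → β} {a b : α} (hab : a ≤ b) (hc : ContinuousOn f (Icc a b))
    (hm : StrictMonoOn f (Icc a b)) : BijOn f (Ioc a b) (Ioc (f a) (f b)) :=
  ⟨fun _ ht => ⟨hm (left_mem_Icc.2 hab) (Ioc_subset_Icc_self ht) ht.1,
    hm.monotoneOn (Ioc_subset_Icc_self ht) (right_mem_Icc.2 hab) ht.2⟩,
    hm.injOn.mono Ioc_subset_Icc_self, intermediate_value_Ioc hab hc⟩

lemma image_Ioc_eq_of_strictMonoOn {α β : Type*} [LinearOrder α] [Preorder β] {f : α → β}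
    {a b : α} {a' b' : β} (hf : BijOn f (Ioc a b) (Ioc a' b')) (hm : StrictMonoOn f (Ioc a b))
    {t : α} (ht : t ∈ Ioc a b) : f '' Ioc a t = Ioc a' (f t) := by
  ext r
  constructor
  · rintro ⟨s, hs, rfl⟩
    have hs' : s ∈ Ioc a b := ⟨hs.1, hs.2.trans ht.2⟩
    exact ⟨(hf.mapsTo hs').1, hm.monotoneOn hs' ht hs.2⟩
  · rintro ⟨hr, hrt⟩
    obtain ⟨s, hs, rfl⟩ := hf.surjOn ⟨hr, hrt.trans (hf.mapsTo ht).2⟩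
    exact ⟨s, ⟨hs.1, (hm.le_iff_le hs ht).1 hrt⟩, rfl⟩

lemma volume_image_affine {a : ℝ} (ha : 0 < a) (b : ℝ) (s : Set ℝ) :
    volume ((fun t => a * t + b) '' s) = ENNReal.ofReal a * volume s := by
  have : (fun t => a * t + b) = (· + b) ∘ (a • ·) := rfl
  rw [this, image_comp, image_add_right, measure_preimage_add_right, image_smul,
    Measure.addHaar_smul, Module.finrank_self, pow_one, abs_of_pos ha]

lemma measurableSet_image_affine {a : ℝ} (ha : a ≠ 0) (b : ℝ) {s : Set ℝ}
    (hs : MeasurableSet s) : MeasurableSet ((fun t => a * t + b) '' s) := by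
  have : (fun t => a * t + b) = (· + b) ∘ (a * ·) := rfl
  rw [this]
  exact ((measurableEmbedding_addRight b).comp
    (measurableEmbedding_mulLeft₀ ha)).measurableSet_image.2 hs

section Partition

variable {x : ℕ → ℝ} {n : ℕ}

lemma strictMonoOn_Iic_of_lt_add_one (hx : ∀ i < n, x i < x (i + 1)) :
    StrictMonoOn x (Iic n) :=
  strictMonoOn_Iic_of_lt_succ fun m hm => by simpa using hx m hm

lemma mem_Icc_of_lt_add_one (hx : ∀ i < n, x i < x (i + 1)) {i : ℕ} (hi : i ≤ n) :
    x i ∈ Icc (x 0) (x n) :=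
  ⟨(strictMonoOn_Iic_of_lt_add_one hx).monotoneOn (Nat.zero_le n) hi (Nat.zero_le i),
    (strictMonoOn_Iic_of_lt_add_one hx).monotoneOn hi self_mem_Iic hi⟩

lemma Ioc_subset_Ioc_of_lt_add_one (hx : ∀ i < n, x i < x (i + 1)) {i : ℕ} (hi : i < n) :
    Ioc (x i) (x (i + 1)) ⊆ Ioc (x 0) (x n) :=
  Ioc_subset_Ioc (mem_Icc_of_lt_add_one hx hi.le).1 (mem_Icc_of_lt_add_one hx hi).2

lemma Ioc_eq_biUnion_Ioc_of_lt_add_one (hx : ∀ i < n, x i < x (i + 1)) :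
    Ioc (x 0) (x n) = ⋃ i ∈ Finset.range n, Ioc (x i) (x (i + 1)) := by
  induction n with
  | zero => simp
  | succ n ih =>
    rw [Finset.range_add_one, Finset.set_biUnion_insert, union_comm,
      ← ih fun i hi => hx i (by omega), Ioc_union_Ioc_eq_Ioc _ (hx n n.lt_add_one).le]
    exact (mem_Icc_of_lt_add_one (fun i hi => hx i (by omega)) le_rfl).1

lemma pairwiseDisjoint_Ioc_of_lt_add_one (hx : ∀ i < n, x i < x (i + 1)) :
    (Finset.range n : Set ℕ).PairwiseDisjoint fun i => Ioc (x i) (x (i + 1)) := by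
  intro i hi j hj hij
  simp only [Finset.coe_range, mem_Iio] at hi hj
  have hmono := (strictMonoOn_Iic_of_lt_add_one hx).monotoneOn
  rcases hij.lt_or_gt with hlt | hlt
  · exact Ioc_disjoint_Ioc_of_le (hmono (mem_Iic.2 hi) (mem_Iic.2 hj.le) hlt)
  · exact (Ioc_disjoint_Ioc_of_le (hmono (mem_Iic.2 hj) (mem_Iic.2 hi.le) hlt)).symm

lemma biUnion_inter_Ioc_eq (hx : ∀ i < n, x i < x (i + 1)) {A : Set ℝ}
    (hA : A ⊆ Ioc (x 0) (x n)) : ⋃ i ∈ Finset.range n, A ∩ Ioc (x i) (x (i + 1)) = A := by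
  rw [← inter_iUnion₂, ← Ioc_eq_biUnion_Ioc_of_lt_add_one hx, inter_eq_left.2 hA]

lemma volume_eq_sum_inter_Ioc (hx : ∀ i < n, x i < x (i + 1)) {A : Set ℝ}
    (hA : MeasurableSet A) (hAsub : A ⊆ Ioc (x 0) (x n)) :
    volume A = ∑ i ∈ Finset.range n, volume (A ∩ Ioc (x i) (x (i + 1))) := by
  nth_rw 1 [← biUnion_inter_Ioc_eq hx hAsub]
  exact measure_biUnion_finset
    ((pairwiseDisjoint_Ioc_of_lt_add_one hx).mono fun _ => inter_subset_right)
    fun _ _ => hA.inter measurableSet_Ioc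

lemma volume_image_eq_sum_of_piecewise_affine {f : ℝ → ℝ} {μ c : ℕ → ℝ}
    (hx : ∀ i < n, x i < x (i + 1)) (hμ : ∀ i < n, 0 < μ i)
    (hf : ∀ i < n, ∀ t ∈ Ioc (x i) (x (i + 1)), f t = μ i * t + c i)
    (hinj : InjOn f (Ioc (x 0) (x n))) {A : Set ℝ} (hA : MeasurableSet A)
    (hAsub : A ⊆ Ioc (x 0) (x n)) :
    volume (f '' A) =
      ∑ i ∈ Finset.range n, ENNReal.ofReal (μ i) * volume (A ∩ Ioc (x i) (x (i + 1))) := by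
  have hpiece : ∀ i < n, f '' (A ∩ Ioc (x i) (x (i + 1))) =
      (fun t => μ i * t + c i) '' (A ∩ Ioc (x i) (x (i + 1))) :=
    fun i hi => EqOn.image_eq fun t ht => hf i hi t ht.2
  have hsub : ∀ i, A ∩ Ioc (x i) (x (i + 1)) ⊆ Ioc (x 0) (x n) :=
    fun _ => inter_subset_left.trans hAsub
  nth_rw 1 [← biUnion_inter_Ioc_eq hx hAsub]
  rw [image_iUnion₂, measure_biUnion_finset]
  · refine Finset.sum_congr rfl fun i hi => ?_
    rw [hpiece i (Finset.mem_range.1 hi), volume_image_affine (hμ i (Finset.mem_range.1 hi))]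
  · intro i hi j hj hij
    exact (((pairwiseDisjoint_Ioc_of_lt_add_one hx).mono fun _ => inter_subset_right) hi hj
      hij).image hinj (hsub i) (hsub j)
  · intro i hi
    rw [hpiece i (Finset.mem_range.1 hi)]
    exact measurableSet_image_affine (hμ i (Finset.mem_range.1 hi)).ne' _
      (hA.inter measurableSet_Ioc)

lemma sum_mul_sub_eq_of_bijOn {f : ℝ → ℝ} {μ c : ℕ → ℝ} (hx : ∀ i < n, x i < x (i + 1))
    (hμ : ∀ i < n, 0 < μ i) (hf : ∀ i < n, ∀ t ∈ Ioc (x i) (x (i + 1)), f t = μ i * t + c i)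
    (hbij : BijOn f (Ioc (x 0) (x n)) (Ioc (x 0) (x n))) :
    ∑ i ∈ Finset.range n, μ i * (x (i + 1) - x i) = x n - x 0 := by
  have hterm : ∀ i ∈ Finset.range n, 0 ≤ μ i * (x (i + 1) - x i) := fun i hi =>
    mul_nonneg (hμ i (Finset.mem_range.1 hi)).le (sub_nonneg.2 (hx i (Finset.mem_range.1 hi)).le)
  have hvol := volume_image_eq_sum_of_piecewise_affine hx hμ hf hbij.injOn measurableSet_Ioc
    subset_rfl
  rw [hbij.image_eq, Real.volume_Ioc, Finset.sum_congr rfl fun i hi => by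
    rw [inter_eq_right.2 (Ioc_subset_Ioc_of_lt_add_one hx (Finset.mem_range.1 hi)),
      Real.volume_Ioc, ← ENNReal.ofReal_mul (hμ i (Finset.mem_range.1 hi)).le],
    ← ENNReal.ofReal_sum_of_nonneg hterm] at hvol
  exact ((ENNReal.ofReal_eq_ofReal_iff (sub_nonneg.2 (mem_Icc_of_lt_add_one hx le_rfl).1)
    (Finset.sum_nonneg hterm)).1 hvol).symm

end Partition

section SlopeIntegral

variable {x μ : ℕ → ℝ} {n : ℕ}

/-- For `t ≥ x 0`, the integral over `[x 0, t]` of the step function equal to `μ j` on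
`(x j, x (j + 1)]`. -/
noncomputable def slopeIntegral (n : ℕ) (x μ : ℕ → ℝ) (t : ℝ) : ℝ :=
  ∑ j ∈ Finset.range n, μ j * (min t (x (j + 1)) - min t (x j))

lemma continuous_slopeIntegral : Continuous (slopeIntegral n x μ) := by
  unfold slopeIntegral
  fun_prop

lemma slopeIntegral_sub (s t : ℝ) :
    slopeIntegral n x μ t - slopeIntegral n x μ s = ∑ j ∈ Finset.range n,
      μ j * ((min t (x (j + 1)) - min t (x j)) - (min s (x (j + 1)) - min s (x j))) := by
  simp only [slopeIntegral, ← Finset.sum_sub_distrib, mul_sub]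

lemma slopeIntegral_eq_add_mul (hx : ∀ i < n, x i < x (i + 1)) {i : ℕ} (hi : i < n) {t : ℝ}
    (ht : t ∈ Icc (x i) (x (i + 1))) :
    slopeIntegral n x μ t = slopeIntegral n x μ (x i) + μ i * (t - x i) := by
  have hmono := (strictMonoOn_Iic_of_lt_add_one hx).monotoneOn
  rw [← sub_eq_iff_eq_add', slopeIntegral_sub, Finset.sum_eq_single i]
  · rw [min_eq_left ht.2, min_eq_right ht.1, min_eq_left (hx i hi).le, min_self]
    ring
  · intro j hj hji
    have hj := Finset.mem_range.1 hj
    have hxj : x j ≤ x (j + 1) := (hx j hj).le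
    rcases hji.lt_or_gt with hlt | hlt
    · have hji : x (j + 1) ≤ x i := hmono (mem_Iic.2 hj) (mem_Iic.2 hi.le) hlt
      rw [min_eq_right (hji.trans ht.1), min_eq_right (hxj.trans (hji.trans ht.1)),
        min_eq_right hji, min_eq_right (hxj.trans hji)]
      ring
    · have hij : x (i + 1) ≤ x j := hmono (mem_Iic.2 hi) (mem_Iic.2 hj.le) hlt
      rw [min_eq_left (ht.2.trans hij), min_eq_left (ht.2.trans (hij.trans hxj)),
        min_eq_left ((hx i hi).le.trans hij), min_eq_left ((hx i hi).le.trans (hij.trans hxj))]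
      ring
  · exact fun h => absurd (Finset.mem_range.2 hi) h

lemma slopeIntegral_apply_of_le (hx : ∀ i < n, x i < x (i + 1)) {i : ℕ} (hi : i ≤ n) :
    slopeIntegral n x μ (x i) = ∑ j ∈ Finset.range i, μ j * (x (j + 1) - x j) := by
  induction i with
  | zero =>
    refine Finset.sum_eq_zero fun j hj => ?_
    have hj := Finset.mem_range.1 hj
    rw [min_eq_left (mem_Icc_of_lt_add_one hx hj).1,
      min_eq_left (mem_Icc_of_lt_add_one hx hj.le).1]
    ring
  | succ i ih =>
    rw [slopeIntegral_eq_add_mul hx hi (right_mem_Icc.2 (hx i hi).le), ih (by omega),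
      Finset.sum_range_succ]

lemma slopeIntegral_apply_zero (hx : ∀ i < n, x i < x (i + 1)) :
    slopeIntegral n x μ (x 0) = 0 :=
  (slopeIntegral_apply_of_le hx (Nat.zero_le n)).trans (Finset.sum_range_zero _)

lemma slopeIntegral_apply_mem {Γ : AddSubgroup ℝ} (hx : ∀ i < n, x i < x (i + 1))
    (hxΓ : ∀ i ≤ n, x i ∈ Γ) (hμΓ : ∀ j < n, ∀ y ∈ Γ, μ j * y ∈ Γ) {i : ℕ} (hi : i ≤ n) :
    slopeIntegral n x μ (x i) ∈ Γ := by
  rw [slopeIntegral_apply_of_le hx hi]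
  refine AddSubgroup.sum_mem _ fun j hj => ?_
  have hj : j < n := (Finset.mem_range.1 hj).trans_le hi
  exact hμΓ j hj _ (sub_mem (hxΓ (j + 1) hj) (hxΓ j hj.le))

lemma slopeIntegral_strictMonoOn (hx : ∀ i < n, x i < x (i + 1)) (hμ : ∀ i < n, 0 < μ i) :
    StrictMonoOn (slopeIntegral n x μ) (Icc (x 0) (x n)) := by
  intro s hs t ht hst
  rw [← sub_pos, slopeIntegral_sub]
  set d : ℕ → ℝ := fun j => (min t (x (j + 1)) - min t (x j)) - (min s (x (j + 1)) - min s (x j))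
  have hd : ∀ j < n, 0 ≤ d j := by
    intro j hj
    have := (hx j hj).le
    simp only [d, min_def]
    split_ifs <;> linarith
  have hsum : ∑ j ∈ Finset.range n, d j = t - s := by
    simp only [d, Finset.sum_sub_distrib, Finset.sum_range_sub fun j => min t (x j),
      Finset.sum_range_sub fun j => min s (x j)]
    rw [min_eq_left ht.2, min_eq_right ht.1, min_eq_left hs.2, min_eq_right hs.1]
    ring
  obtain ⟨j, hj, hdj⟩ := Finset.exists_lt_of_sum_lt (f := fun _ => (0 : ℝ))
    (s := Finset.range n) (by rw [hsum, Finset.sum_const_zero]; linarith)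
  have hj := Finset.mem_range.1 hj
  exact Finset.sum_pos' (fun j hj => mul_nonneg (hμ j (Finset.mem_range.1 hj)).le
    (hd j (Finset.mem_range.1 hj))) ⟨j, Finset.mem_range.2 hj, mul_pos (hμ j hj) hdj⟩

lemma bijOn_slopeIntegral_Ioc (hx : ∀ i < n, x i < x (i + 1)) (hμ : ∀ i < n, 0 < μ i)
    {i j : ℕ} (hij : i ≤ j) (hj : j ≤ n) :
    BijOn (slopeIntegral n x μ) (Ioc (x i) (x j))
      (Ioc (slopeIntegral n x μ (x i)) (slopeIntegral n x μ (x j))) :=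
  bijOn_Ioc_of_strictMonoOn ((strictMonoOn_Iic_of_lt_add_one hx).monotoneOn (hij.trans hj) hj hij)
    continuous_slopeIntegral.continuousOn ((slopeIntegral_strictMonoOn hx hμ).mono
      (Icc_subset_Icc (mem_Icc_of_lt_add_one hx (hij.trans hj)).1 (mem_Icc_of_lt_add_one hx hj).2))

end SlopeIntegral

section IntervalExchange

variable {Γ : Set ℝ} {ℓ : ℝ} {g g' h h' : ℝ → ℝ}

lemma IsSteinIE.volume_image (hg : IsSteinIE Γ ℓ g) {A : Set ℝ} (hA : MeasurableSet A)
    (hAsub : A ⊆ Ioc 0 ℓ) : volume (g '' A) = volume A := by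
  obtain ⟨hbij, n, x, μ, c, -, hx0, hxn, hx, -, hμc, hpiece⟩ := hg
  have hμ : ∀ i < n, μ i = 1 := fun i hi => (hμc i hi).1
  rw [← hx0, ← hxn] at hbij hAsub
  rw [volume_image_eq_sum_of_piecewise_affine hx (fun i hi => (hμ i hi).symm ▸ one_pos) hpiece
    hbij.injOn hA hAsub, volume_eq_sum_inter_Ioc hx hA hAsub]
  refine Finset.sum_congr rfl fun i hi => ?_
  rw [hμ i (Finset.mem_range.1 hi), ENNReal.ofReal_one, one_mul]

lemma IsSteinIE.volume_comp_image_Ioc (hg : IsSteinIE Γ ℓ g)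
    (hh : BijOn h (Ioc 0 ℓ) (Ioc 0 ℓ)) (hm : StrictMonoOn h (Ioc 0 ℓ)) {t : ℝ}
    (ht : t ∈ Ioc 0 ℓ) : volume ((g ∘ h) '' Ioc 0 t) = ENNReal.ofReal (h t) := by
  rw [image_comp, image_Ioc_eq_of_strictMonoOn hh hm ht,
    hg.volume_image measurableSet_Ioc (Ioc_subset_Ioc_right (hh.mapsTo ht).2), Real.volume_Ioc,
    sub_zero]

lemma IsSteinIE.eqOn_of_comp_eqOn {Γ' : Set ℝ} (hg : IsSteinIE Γ ℓ g) (hg' : IsSteinIE Γ' ℓ g')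
    (hh : BijOn h (Ioc 0 ℓ) (Ioc 0 ℓ)) (hm : StrictMonoOn h (Ioc 0 ℓ))
    (hh' : BijOn h' (Ioc 0 ℓ) (Ioc 0 ℓ)) (hm' : StrictMonoOn h' (Ioc 0 ℓ))
    (heq : EqOn (g ∘ h) (g' ∘ h') (Ioc 0 ℓ)) : EqOn g g' (Ioc 0 ℓ) ∧ EqOn h h' (Ioc 0 ℓ) := by
  have hhh' : EqOn h h' (Ioc 0 ℓ) := by
    intro t ht
    have hvol := hg.volume_comp_image_Ioc hh hm ht
    rw [(heq.mono (Ioc_subset_Ioc_right ht.2)).image_eq,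
      hg'.volume_comp_image_Ioc hh' hm' ht] at hvol
    exact ((ENNReal.ofReal_eq_ofReal_iff (hh'.mapsTo ht).1.le (hh.mapsTo ht).1.le).1 hvol).symm
  refine ⟨fun s hs => ?_, hhh'⟩
  obtain ⟨t, ht, rfl⟩ := hh.surjOn hs
  exact (heq ht).trans (congrArg g' (hhh' ht).symm)

end IntervalExchange

lemma slopeIntegral_isSteinF {Γ : AddSubgroup ℝ} {Λ : Set ℝ} {ℓ : ℝ} {n : ℕ} {x μ : ℕ → ℝ}
    (hΛpos : ∀ μ ∈ Λ, 0 < μ) (hΓΛ : ∀ μ ∈ Λ, ∀ x ∈ Γ, μ * x ∈ Γ) (hn : 0 < n) (hx0 : x 0 = 0)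
    (hxn : x n = ℓ) (hx : ∀ i < n, x i < x (i + 1)) (hxΓ : ∀ i ≤ n, x i ∈ Γ)
    (hμΛ : ∀ i < n, μ i ∈ Λ) (hend : slopeIntegral n x μ (x n) = x n) :
    IsSteinF Γ Λ ℓ (slopeIntegral n x μ) := by
  have hμ : ∀ i < n, 0 < μ i := fun i hi => hΛpos _ (hμΛ i hi)
  have hbij := bijOn_slopeIntegral_Ioc hx hμ (Nat.zero_le n) le_rfl
  rw [slopeIntegral_apply_zero hx, hend, hx0, hxn] at hbij
  refine ⟨⟨hbij, n, x, μ, fun i => slopeIntegral n x μ (x i) - μ i * x i, hn, hx0, hxn, hx, hxΓ,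
    fun i hi => ⟨hμΛ i hi, sub_mem (slopeIntegral_apply_mem hx hxΓ
      (fun j hj => hΓΛ _ (hμΛ j hj)) hi.le) (hΓΛ _ (hμΛ i hi) _ (hxΓ i hi.le))⟩,
    fun i hi t ht => ?_⟩, hx0 ▸ hxn ▸ (slopeIntegral_strictMonoOn hx hμ).mono Ioc_subset_Icc_self,
    continuous_slopeIntegral.continuousOn⟩
  rw [slopeIntegral_eq_add_mul hx hi (Ioc_subset_Icc_self ht)]
  ring

lemma IsSteinV.exists_eqOn_comp {Γ : AddSubgroup ℝ} {Λ : Set ℝ} {ℓ : ℝ} {f : ℝ → ℝ}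
    (hΛpos : ∀ μ ∈ Λ, 0 < μ) (hΓΛ : ∀ μ ∈ Λ, ∀ x ∈ Γ, μ * x ∈ Γ) (hf : IsSteinV Γ Λ ℓ f) :
    ∃ g h, IsSteinIE Γ ℓ g ∧ IsSteinF Γ Λ ℓ h ∧ EqOn f (g ∘ h) (Ioc 0 ℓ) := by
  obtain ⟨hbij, n, x, μ, c, hn, hx0, hxn, hx, hxΓ, hμc, hpiece⟩ := hf
  have hμ : ∀ i < n, 0 < μ i := fun i hi => hΛpos _ (hμc i hi).1
  have hend : slopeIntegral n x μ (x n) = x n := by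
    rw [slopeIntegral_apply_of_le hx le_rfl,
      sum_mul_sub_eq_of_bijOn hx hμ hpiece (hx0 ▸ hxn ▸ hbij), hx0, sub_zero]
  have hF := slopeIntegral_isSteinF hΛpos hΓΛ hn hx0 hxn hx hxΓ (fun i hi => (hμc i hi).1) hend
  set h := slopeIntegral n x μ
  set g := f ∘ Function.invFunOn h (Ioc 0 ℓ)
  have hbijh : BijOn h (Ioc 0 ℓ) (Ioc 0 ℓ) := hF.1.1
  have hgh : ∀ t ∈ Ioc 0 ℓ, g (h t) = f t :=
    fun t ht => congrArg f (hbijh.injOn.leftInvOn_invFunOn ht)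
  have hgpiece : ∀ i < n, ∀ s ∈ Ioc (h (x i)) (h (x (i + 1))),
      g s = 1 * s + (μ i * x i + c i - h (x i)) := by
    intro i hi s hs
    obtain ⟨t, ht, rfl⟩ := (bijOn_slopeIntegral_Ioc hx hμ i.le_succ hi).surjOn hs
    rw [hgh t (hx0 ▸ hxn ▸ Ioc_subset_Ioc_of_lt_add_one hx hi ht), hpiece i hi t ht,
      slopeIntegral_eq_add_mul hx hi (Ioc_subset_Icc_self ht)]
    ring
  have hΓ : ∀ i ≤ n, h (x i) ∈ Γ :=
    fun i => slopeIntegral_apply_mem hx hxΓ fun j hj => hΓΛ _ (hμc j hj).1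
  have hmem : ∀ {i}, i ≤ n → x i ∈ Icc (x 0) (x n) := mem_Icc_of_lt_add_one hx
  refine ⟨g, h, ⟨hbij.comp (hbijh.symm hbijh.invOn_invFunOn.symm), n, h ∘ x, fun _ => 1,
    fun i => μ i * x i + c i - h (x i), hn, slopeIntegral_apply_zero hx, hend.trans hxn,
    fun i hi => slopeIntegral_strictMonoOn hx hμ (hmem hi.le) (hmem hi) (hx i hi), hΓ,
    fun i hi => ⟨rfl, sub_mem (add_mem (hΓΛ _ (hμc i hi).1 _ (hxΓ i hi.le)) (hμc i hi).2)
      (hΓ i hi.le)⟩, hgpiece⟩, hF, fun t ht => (hgh t ht).symm⟩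

theorem steinV_zappa_szep_general (Λ : Set ℝ) (hΛpos : ∀ μ ∈ Λ, (0:ℝ) < μ)
    (Γ : AddSubgroup ℝ) (hΓΛ : ∀ μ ∈ Λ, ∀ x ∈ Γ, μ * x ∈ Γ)
    (ℓ : ℝ) :
    ∀ f : ℝ → ℝ, IsSteinV (Γ : Set ℝ) Λ ℓ f →
      ∃ g h : ℝ → ℝ, IsSteinIE (Γ : Set ℝ) ℓ g ∧ IsSteinF (Γ : Set ℝ) Λ ℓ h ∧
        Set.EqOn f (g ∘ h) (Ioc 0 ℓ) ∧
        ∀ g' h' : ℝ → ℝ, IsSteinIE (Γ : Set ℝ) ℓ g' → IsSteinF (Γ : Set ℝ) Λ ℓ h' →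
          Set.EqOn f (g' ∘ h') (Ioc 0 ℓ) →
          Set.EqOn g g' (Ioc 0 ℓ) ∧ Set.EqOn h h' (Ioc 0 ℓ) := by
  intro f hf
  obtain ⟨g, h, hg, hh, hfgh⟩ := hf.exists_eqOn_comp hΛpos hΓΛ
  refine ⟨g, h, hg, hh, hfgh, fun g' h' hg' hh' hfgh' => ?_⟩
  exact hg.eqOn_of_comp_eqOn hg' hh.1.1 hh.2.1 hh'.1.1 hh'.2.1 (hfgh.symm.trans hfgh')

/-- every `f ∈ V(Γ,Λ,ℓ)` factors uniquely as `f = g ∘ h` with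
`g ∈ IE(Γ,ℓ)` and `h ∈ F(Γ,Λ,ℓ)`; that is, `V(Γ,Λ,ℓ) = IE(Γ,ℓ)·F(Γ,Λ,ℓ)` with unique
factorization (a Zappa–Szép product). -/
theorem steinV_zappa_szep (Λ : Set ℝ) (hΛpos : ∀ μ ∈ Λ, (0:ℝ) < μ) (hΛ1 : (1:ℝ) ∈ Λ)
    (hΛmul : ∀ μ ∈ Λ, ∀ ν ∈ Λ, μ * ν ∈ Λ) (hΛinv : ∀ μ ∈ Λ, μ⁻¹ ∈ Λ)
    (Γ : AddSubgroup ℝ) (hΓΛ : ∀ μ ∈ Λ, ∀ x ∈ Γ, μ * x ∈ Γ)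
    (ℓ : ℝ) (hℓΓ : ℓ ∈ Γ) (hℓ : 0 < ℓ) :
    ∀ f : ℝ → ℝ, IsSteinV (Γ : Set ℝ) Λ ℓ f →
      ∃ g h : ℝ → ℝ, IsSteinIE (Γ : Set ℝ) ℓ g ∧ IsSteinF (Γ : Set ℝ) Λ ℓ h ∧
        Set.EqOn f (g ∘ h) (Ioc 0 ℓ) ∧
        ∀ g' h' : ℝ → ℝ, IsSteinIE (Γ : Set ℝ) ℓ g' → IsSteinF (Γ : Set ℝ) Λ ℓ h' →
          Set.EqOn f (g' ∘ h') (Ioc 0 ℓ) →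
          Set.EqOn g g' (Ioc 0 ℓ) ∧ Set.EqOn h h' (Ioc 0 ℓ) :=
  steinV_zappa_szep_general Λ hΛpos Γ hΓΛ ℓ
end

section
/- Let Γ ⊂ ℝ be countable and dense. Define ℝ_Γ to be the set obtained from ℝ by replacing each point a ∈ Γ with two points a₋ < a₊, linearly ordered by the induced order, with the order topology. Then the sets [a₊, b₋] = (a₋, b₊) for a, b ∈ Γ with a < b form a countable basis of compact open sets for ℝ_Γ, and each such set is homeomorphic to the Cantor set. -/
/-- The doubled-points space `ℝ_Γ`: points of `ℝ \ Γ` together with two points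
`a₋ = (a, false)` and `a₊ = (a, true)` for each `a ∈ Γ`, linearly ordered lexicographically. -/
def RGamma (Γ : Set ℝ) : Type :=
  {p : ℝ ×ₗ Bool // (ofLex p).1 ∈ Γ ∨ (ofLex p).2 = false}

noncomputable instance (Γ : Set ℝ) : LinearOrder (RGamma Γ) :=
  inferInstanceAs (LinearOrder {p : ℝ ×ₗ Bool // (ofLex p).1 ∈ Γ ∨ (ofLex p).2 = false})

/-- `ℝ_Γ` carries the order topology. -/
noncomputable instance (Γ : Set ℝ) : TopologicalSpace (RGamma Γ) := Preorder.topology _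

instance (Γ : Set ℝ) : OrderTopology (RGamma Γ) := ⟨rfl⟩

/-- The point `a₊` for `a ∈ Γ`. -/
def RGamma.plus (Γ : Set ℝ) (a : ℝ) (ha : a ∈ Γ) : RGamma Γ :=
  ⟨toLex (a, true), Or.inl ha⟩

/-- The point `a₋` for `a ∈ Γ`. -/
def RGamma.minus (Γ : Set ℝ) (a : ℝ) (_ha : a ∈ Γ) : RGamma Γ :=
  ⟨toLex (a, false), Or.inr rfl⟩

/-- The canonical quotient map `q : ℝ_Γ → ℝ`, `t ↦ t`, `a₊, a₋ ↦ a`. -/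
def RGamma.q (Γ : Set ℝ) (x : RGamma Γ) : ℝ := (ofLex x.1).1

open TopologicalSpace

/-!
Enumerate `Γ` as `e₀, e₁, …`. Cutting `[a, b]` at the first `eₙ` inside the current interval and
keeping the left or right half according to a bit sequence `x` gives nested intervals `[uₙ, vₙ]`;
since each cut point becomes an endpoint, every `eⱼ` lies outside `(uₙ, vₙ)` from stage `j + 1`
on. Hence the cells `[uₙ₊, vₙ₋]` of `ℝ_Γ` shrink to a single point `F x`, and `F` is a continuous
injection of `ℕ → Bool` onto `[a₊, b₋]`, so a homeomorphism by compactness. Density of `Γ` alone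
gives the basis: between `l < z` there is always some `A₊ ∈ (l, z]`.
-/

open Topology

theorem Prod.Lex.toLex_false_covBy_toLex_true {α : Type*} [Preorder α] (c : α) :
    toLex (c, false) ⋖ toLex (c, true) :=
  Prod.Lex.toLex_covBy_toLex_iff.2 (Or.inl ⟨rfl, by decide⟩)

theorem DenseRange.exists_apply_mem_Ioo {ι α : Type*} [LinearOrder α] [TopologicalSpace α]
    [OrderTopology α] [DenselyOrdered α] {e : ι → α} (hd : DenseRange e) :
    ∀ ⦃u v : α⦄, u < v → ∃ i, e i ∈ Set.Ioo u v := fun _ _ h => by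
  obtain ⟨_, ⟨i, rfl⟩, hi⟩ := hd.exists_between h
  exact ⟨i, hi⟩

namespace Bisection

variable {α : Type*} [LinearOrder α] {e : ℕ → α} {u v a b : α}

open Classical in
noncomputable def pivot (e : ℕ → α) (u v : α) : α :=
  if h : ∃ n, e n ∈ Set.Ioo u v then e (Nat.find h) else u

noncomputable def step (e : ℕ → α) (bit : Bool) (p : α × α) : α × α :=
  if bit then (pivot e p.1 p.2, p.2) else (p.1, pivot e p.1 p.2)

noncomputable def intervals (e : ℕ → α) (a b : α) (x : ℕ → Bool) : ℕ → α × α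
  | 0 => (a, b)
  | n + 1 => step e (x n) (intervals e a b x n)

noncomputable def adaptiveIntervals (e : ℕ → α) (a b : α) (choice : α × α → Bool) : ℕ → α × α
  | 0 => (a, b)
  | n + 1 => step e (choice (adaptiveIntervals e a b choice n)) (adaptiveIntervals e a b choice n)

section DenseEnumeration

variable (he : ∀ ⦃u v : α⦄, u < v → ∃ n, e n ∈ Set.Ioo u v)
include he

theorem pivot_mem_Ioo (h : u < v) : pivot e u v ∈ Set.Ioo u v := by
  rw [pivot, dif_pos (he h)]
  exact Nat.find_spec (he h)

theorem step_fst_lt_snd {p : α × α} (h : p.1 < p.2) (bit : Bool) :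
    (step e bit p).1 < (step e bit p).2 := by
  have := pivot_mem_Ioo he h
  cases bit <;> simp [step, this.1, this.2]

theorem le_step_fst {p : α × α} (h : p.1 < p.2) (bit : Bool) : p.1 ≤ (step e bit p).1 := by
  have := pivot_mem_Ioo he h
  cases bit <;> simp [step, this.1.le]

theorem step_snd_le {p : α × α} (h : p.1 < p.2) (bit : Bool) : (step e bit p).2 ≤ p.2 := by
  have := pivot_mem_Ioo he h
  cases bit <;> simp [step, this.2.le]

variable (hab : a < b) (x : ℕ → Bool)
include hab

theorem intervals_fst_lt_snd (n : ℕ) : (intervals e a b x n).1 < (intervals e a b x n).2 := by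
  induction n with
  | zero => exact hab
  | succ n ih => exact step_fst_lt_snd he ih _

theorem monotone_intervals_fst : Monotone fun n => (intervals e a b x n).1 :=
  monotone_nat_of_le_succ fun n => le_step_fst he (intervals_fst_lt_snd he hab x n) _

theorem antitone_intervals_snd : Antitone fun n => (intervals e a b x n).2 :=
  antitone_nat_of_succ_le fun n => step_snd_le he (intervals_fst_lt_snd he hab x n) _

theorem intervals_fst_lt_intervals_snd (m n : ℕ) :
    (intervals e a b x m).1 < (intervals e a b x n).2 :=
  calc (intervals e a b x m).1 ≤ (intervals e a b x (max m n)).1 :=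
        monotone_intervals_fst he hab x (le_max_left m n)
    _ < (intervals e a b x (max m n)).2 := intervals_fst_lt_snd he hab x _
    _ ≤ (intervals e a b x n).2 := antitone_intervals_snd he hab x (le_max_right m n)

/-- Each pivot becomes an endpoint of the next interval, so the least index of a point of `e`
inside the interval grows strictly from stage to stage. -/
theorem apply_notMem_Ioo_intervals {j n : ℕ} (hjn : j < n) :
    e j ∉ Set.Ioo (intervals e a b x n).1 (intervals e a b x n).2 := by
  induction n generalizing j with
  | zero => exact absurd hjn (Nat.not_lt_zero j)
  | succ n ih =>
    set p := intervals e a b x n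
    have hp : p.1 < p.2 := intervals_fst_lt_snd he hab x n
    have hsub : Set.Ioo (step e (x n) p).1 (step e (x n) p).2 ⊆ Set.Ioo p.1 p.2 :=
      Set.Ioo_subset_Ioo (le_step_fst he hp _) (step_snd_le he hp _)
    intro hj
    rcases (Nat.lt_succ_iff.1 hjn).lt_or_eq with hjn | rfl
    · exact ih hjn (hsub hj)
    have hex : ∃ k, e k ∈ Set.Ioo p.1 p.2 := ⟨j, hsub hj⟩
    have hpivot : pivot e p.1 p.2 = e j := by
      rw [pivot, dif_pos hex, (Nat.find_eq_iff hex).2 ⟨hsub hj, fun k hk => ih hk⟩]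
    cases hx : x j <;> simp [intervals, step, hx, ← hpivot, p] at hj

theorem exists_notMem_Ioo_intervals {c : α} (hc : c ∈ Set.range e) :
    ∃ n, c ∉ Set.Ioo (intervals e a b x n).1 (intervals e a b x n).2 := by
  obtain ⟨k, rfl⟩ := hc
  exact ⟨k + 1, apply_notMem_Ioo_intervals he hab x k.lt_succ_self⟩

end DenseEnumeration

theorem intervals_eq_of_mem_cylinder {x y : ℕ → Bool} {n : ℕ} (h : y ∈ PiNat.cylinder x n) :
    intervals e a b y n = intervals e a b x n := by
  induction n with
  | zero => rfl
  | succ n ih =>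
    rw [intervals, intervals, ih (PiNat.cylinder_anti x n.le_succ h), h n n.lt_succ_self]

theorem intervals_succ_snd_eq_fst {x y : ℕ → Bool} {n : ℕ} (h : y ∈ PiNat.cylinder x n)
    (hx : x n = false) (hy : y n = true) :
    (intervals e a b x (n + 1)).2 = (intervals e a b y (n + 1)).1 := by
  simp [intervals, step, hx, hy, intervals_eq_of_mem_cylinder h]

theorem intervals_mem {S : Set α} (ha : a ∈ S) (hb : b ∈ S) (hS : Set.range e ⊆ S)
    (x : ℕ → Bool) (n : ℕ) : (intervals e a b x n).1 ∈ S ∧ (intervals e a b x n).2 ∈ S := by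
  induction n with
  | zero => exact ⟨ha, hb⟩
  | succ n ih =>
    have hpivot : pivot e (intervals e a b x n).1 (intervals e a b x n).2 ∈ S := by
      unfold pivot; split_ifs
      exacts [hS ⟨_, rfl⟩, ih.1]
    cases hx : x n <;> simp [intervals, step, hx, ih.1, ih.2, hpivot]

theorem intervals_adaptiveIntervals (choice : α × α → Bool) :
    intervals e a b (fun n => choice (adaptiveIntervals e a b choice n)) =
      adaptiveIntervals e a b choice := by
  funext n
  induction n with
  | zero => rfl
  | succ n ih => rw [intervals, adaptiveIntervals, ih]

end Bisection

namespace RGamma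

variable {Γ : Set ℝ}

/-- `[u₊, v₋]`, also for `u, v ∉ Γ`. -/
def cell (Γ : Set ℝ) (u v : ℝ) : Set (RGamma Γ) :=
  Subtype.val ⁻¹' Set.Icc (toLex (u, true)) (toLex (v, false))

theorem Icc_plus_minus {a b : ℝ} (ha : a ∈ Γ) (hb : b ∈ Γ) :
    Set.Icc (plus Γ a ha) (minus Γ b hb) = cell Γ a b := rfl

theorem cell_eq_Ioo {a b : ℝ} (ha : a ∈ Γ) (hb : b ∈ Γ) :
    cell Γ a b = Set.Ioo (minus Γ a ha) (plus Γ b hb) := by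
  ext w
  exact and_congr (Prod.Lex.toLex_false_covBy_toLex_true a).lt_iff_le_right.symm
    (Prod.Lex.toLex_false_covBy_toLex_true b).lt_iff_le_left.symm

theorem isOpen_cell {a b : ℝ} (ha : a ∈ Γ) (hb : b ∈ Γ) : IsOpen (cell Γ a b) :=
  cell_eq_Ioo ha hb ▸ isOpen_Ioo

theorem cell_subset_cell {a b a' b' : ℝ} (ha : a ≤ a') (hb : b' ≤ b) :
    cell Γ a' b' ⊆ cell Γ a b :=
  Set.preimage_mono <|
    Set.Icc_subset_Icc (Prod.Lex.toLex_mono ⟨ha, le_rfl⟩) (Prod.Lex.toLex_mono ⟨hb, le_rfl⟩)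

theorem lt_of_q_lt {w z : RGamma Γ} (h : q Γ w < q Γ z) : w < z :=
  Prod.Lex.lt_iff.2 (Or.inl h)

theorem lt_of_mem_cell {a b : ℝ} {w : RGamma Γ} (hw : w ∈ cell Γ a b) : a < b :=
  (Prod.Lex.toLex_le_toLex.1 (hw.1.trans hw.2)).resolve_right (by simp)

theorem exists_plus_mem_Ioc (hd : Dense Γ) {l z : RGamma Γ} (h : l < z) :
    ∃ A, ∃ hA : A ∈ Γ, plus Γ A hA ∈ Set.Ioc l z := by
  obtain ⟨⟨c, β⟩, hz⟩ := z
  cases β with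
  | true => exact ⟨c, hz.resolve_right Bool.noConfusion, h, le_rfl⟩
  | false =>
    have hlc : q Γ l < c := by
      rcases Prod.Lex.lt_iff.1 h with h | ⟨-, h⟩
      · exact h
      · exact absurd h (Bool.false_le _).not_gt
    obtain ⟨A, hA, hlA, hAc⟩ := hd.exists_between hlc
    exact ⟨A, hA, lt_of_q_lt hlA, Prod.Lex.toLex_le_toLex.2 (Or.inl hAc)⟩

theorem exists_minus_mem_Ico (hd : Dense Γ) {z u : RGamma Γ} (h : z < u) :
    ∃ B, ∃ hB : B ∈ Γ, minus Γ B hB ∈ Set.Ico z u := by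
  obtain ⟨B, hB, hzB, hBu⟩ := exists_plus_mem_Ioc hd h
  exact ⟨B, hB, (Prod.Lex.toLex_false_covBy_toLex_true B).le_of_lt hzB,
    lt_of_lt_of_le (Prod.Lex.toLex_false_covBy_toLex_true B).lt hBu⟩

theorem exists_mem_cell_subset_of_mem_nhds (hd : Dense Γ) {z : RGamma Γ} {U : Set (RGamma Γ)}
    (hU : U ∈ 𝓝 z) : ∃ A ∈ Γ, ∃ B ∈ Γ, z ∈ cell Γ A B ∧ cell Γ A B ⊆ U := by
  obtain ⟨A₀, hA₀, hA₀z⟩ := hd.exists_lt (q Γ z)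
  obtain ⟨B₀, hB₀, hzB₀⟩ := hd.exists_gt (q Γ z)
  obtain ⟨l, u, ⟨hl, hu⟩, hsub⟩ := (mem_nhds_iff_exists_Ioo_subset'
    ⟨minus Γ A₀ hA₀, lt_of_q_lt hA₀z⟩ ⟨plus Γ B₀ hB₀, lt_of_q_lt hzB₀⟩).1 hU
  obtain ⟨A, hA, hlA, hAz⟩ := exists_plus_mem_Ioc hd hl
  obtain ⟨B, hB, hzB, hBu⟩ := exists_minus_mem_Ico hd hu
  exact ⟨A, hA, B, hB, ⟨hAz, hzB⟩,
    fun w hw => hsub ⟨hlA.trans_le hw.1, lt_of_le_of_lt hw.2 hBu⟩⟩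

theorem isTopologicalBasis_Icc_plus_minus (hd : Dense Γ) :
    IsTopologicalBasis {S : Set (RGamma Γ) | ∃ a, ∃ ha : a ∈ Γ, ∃ b, ∃ hb : b ∈ Γ,
        a < b ∧ S = Set.Icc (plus Γ a ha) (minus Γ b hb)} := by
  refine isTopologicalBasis_of_isOpen_of_nhds ?_ fun z U hz hU => ?_
  · rintro _ ⟨a, ha, b, hb, -, rfl⟩
    exact isOpen_cell ha hb
  · obtain ⟨A, hA, B, hB, hzAB, hsub⟩ := exists_mem_cell_subset_of_mem_nhds hd (hU.mem_nhds hz)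
    exact ⟨cell Γ A B, ⟨A, hA, B, hB, lt_of_mem_cell hzAB, rfl⟩, hzAB, hsub⟩

section NestedCells

variable {u v : ℕ → ℝ} {w : RGamma Γ}

/-- The common point is `c₊` if the left endpoints attain their supremum `c`, and `(c, false)`
otherwise. -/
theorem exists_forall_mem_cell (hu : ∀ n, u n ∈ Γ) (huv : ∀ m n, u m < v n) :
    ∃ w : RGamma Γ, ∀ n, w ∈ cell Γ (u n) (v n) := by
  have hbdd : BddAbove (Set.range u) := ⟨v 0, by rintro _ ⟨m, rfl⟩; exact (huv m 0).le⟩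
  set c := ⨆ n, u n
  by_cases hc : ∃ k, u k = c
  · obtain ⟨k, hk⟩ := hc
    refine ⟨⟨toLex (c, true), Or.inl (hk ▸ hu k)⟩, fun n => ⟨?_, ?_⟩⟩
    · exact Prod.Lex.toLex_mono ⟨le_ciSup hbdd n, le_rfl⟩
    · exact Prod.Lex.toLex_le_toLex.2 (Or.inl (hk ▸ huv k n))
  · simp only [not_exists] at hc
    refine ⟨⟨toLex (c, false), Or.inr rfl⟩, fun n => ⟨?_, ?_⟩⟩
    · exact Prod.Lex.toLex_le_toLex.2 (Or.inl ((le_ciSup hbdd n).lt_of_ne (hc n)))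
    · exact Prod.Lex.toLex_mono ⟨ciSup_le fun m => (huv m n).le, le_rfl⟩

variable (hsep : ∀ c ∈ Γ, ∃ n, c ∉ Set.Ioo (u n) (v n)) (hw : ∀ n, w ∈ cell Γ (u n) (v n))
include hsep hw

theorem exists_le_fst_of_plus_le {A : ℝ} (hA : A ∈ Γ) (h : plus Γ A hA ≤ w) : ∃ n, A ≤ u n := by
  obtain ⟨n, hn⟩ := hsep A hA
  rw [Set.mem_Ioo, not_and_or, not_lt, not_lt] at hn
  refine ⟨n, hn.resolve_right fun hvA => ?_⟩
  have hAw : toLex (A, true) ≤ w.1 := h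
  have hwA : w.1 ≤ toLex (A, false) :=
    (hw n).2.trans (Prod.Lex.toLex_mono (show (v n, false) ≤ (A, false) from ⟨hvA, le_rfl⟩))
  exact (hAw.trans hwA).not_gt (Prod.Lex.toLex_false_covBy_toLex_true A).lt

theorem exists_snd_le_of_le_minus {B : ℝ} (hB : B ∈ Γ) (h : w ≤ minus Γ B hB) :
    ∃ n, v n ≤ B := by
  obtain ⟨n, hn⟩ := hsep B hB
  rw [Set.mem_Ioo, not_and_or, not_lt, not_lt] at hn
  refine ⟨n, hn.resolve_left fun hBu => ?_⟩
  have hBw : toLex (B, true) ≤ w.1 :=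
    (Prod.Lex.toLex_mono (show (B, true) ≤ (u n, true) from ⟨hBu, le_rfl⟩)).trans (hw n).1
  have hwB : w.1 ≤ toLex (B, false) := h
  exact (hBw.trans hwB).not_gt (Prod.Lex.toLex_false_covBy_toLex_true B).lt

theorem exists_cell_subset_of_forall_mem_cell (hd : Dense Γ) (hu : Monotone u) (hv : Antitone v)
    {U : Set (RGamma Γ)} (hU : U ∈ 𝓝 w) : ∃ n, cell Γ (u n) (v n) ⊆ U := by
  obtain ⟨A, hA, B, hB, ⟨hAw, hwB⟩, hsub⟩ := exists_mem_cell_subset_of_mem_nhds hd hU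
  obtain ⟨m, hm⟩ := exists_le_fst_of_plus_le hsep hw hA hAw
  obtain ⟨n, hn⟩ := exists_snd_le_of_le_minus hsep hw hB hwB
  exact ⟨max m n, (cell_subset_cell (hm.trans (hu (le_max_left m n)))
    ((hv (le_max_right m n)).trans hn)).trans hsub⟩

theorem eq_of_forall_mem_cell (hd : Dense Γ) (hu : Monotone u) (hv : Antitone v) {w' : RGamma Γ}
    (hw' : ∀ n, w' ∈ cell Γ (u n) (v n)) : w' = w :=
  (specializes_iff_pure.2 <| Filter.le_def.2 fun _ hU =>
    (exists_cell_subset_of_forall_mem_cell hsep hw hd hu hv hU).choose_spec (hw' _)).eq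

end NestedCells

section CantorMap

open Bisection

variable {e : ℕ → ℝ} {a b : ℝ}

theorem mem_cell_step {w : RGamma Γ} {p : ℝ × ℝ} (hw : w ∈ cell Γ p.1 p.2) :
    w ∈ cell Γ (step e (decide (toLex (pivot e p.1 p.2, false) < w.1)) p).1
      (step e (decide (toLex (pivot e p.1 p.2, false) < w.1)) p).2 := by
  by_cases h : toLex (pivot e p.1 p.2, false) < w.1
  · simp only [step, h, decide_true, if_true]
    exact ⟨(Prod.Lex.toLex_false_covBy_toLex_true _).ge_of_gt h, hw.2⟩
  · simp only [step, h, decide_false, Bool.false_eq_true, if_false]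
    exact ⟨hw.1, not_lt.1 h⟩

theorem exists_forall_mem_cell_intervals (hd : DenseRange e) (ha : a ∈ Set.range e)
    (hb : b ∈ Set.range e) (hab : a < b) (x : ℕ → Bool) :
    ∃ w : RGamma (Set.range e), ∀ n,
      w ∈ cell _ (intervals e a b x n).1 (intervals e a b x n).2 :=
  exists_forall_mem_cell (fun n => (intervals_mem ha hb subset_rfl x n).1)
    (intervals_fst_lt_intervals_snd hd.exists_apply_mem_Ioo hab x)

variable {F : (ℕ → Bool) → RGamma (Set.range e)}
  (hF : ∀ x n, F x ∈ cell _ (intervals e a b x n).1 (intervals e a b x n).2)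
include hF

theorem eq_of_forall_mem_cell_intervals (hd : DenseRange e) (hab : a < b) {x : ℕ → Bool}
    {w : RGamma (Set.range e)}
    (hw : ∀ n, w ∈ cell _ (intervals e a b x n).1 (intervals e a b x n).2) : F x = w :=
  have he := hd.exists_apply_mem_Ioo
  eq_of_forall_mem_cell (fun _ => exists_notMem_Ioo_intervals he hab x) hw hd
    (monotone_intervals_fst he hab x) (antitone_intervals_snd he hab x) (hF x)

theorem continuous_of_forall_mem_cell_intervals (hd : DenseRange e) (hab : a < b) :
    Continuous F := by
  have he := hd.exists_apply_mem_Ioo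
  refine continuous_iff_continuousAt.2 fun x U hU => ?_
  obtain ⟨n, hn⟩ := exists_cell_subset_of_forall_mem_cell
    (fun _ => exists_notMem_Ioo_intervals he hab x) (hF x) hd
    (monotone_intervals_fst he hab x) (antitone_intervals_snd he hab x) hU
  refine Filter.mem_map.2 <| Filter.mem_of_superset ((PiNat.isOpen_cylinder _ x n).mem_nhds
    (PiNat.self_mem_cylinder x n)) fun y hy => hn ?_
  rw [← intervals_eq_of_mem_cylinder hy]
  exact hF y n

theorem lt_of_forall_mem_cell_intervals {x y : ℕ → Bool} {n : ℕ}
    (h : y ∈ PiNat.cylinder x n) (hx : x n = false) (hy : y n = true) : F x < F y := by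
  have hxy := intervals_succ_snd_eq_fst (e := e) (a := a) (b := b) h hx hy
  calc (F x).1 ≤ toLex ((intervals e a b x (n + 1)).2, false) := (hF x (n + 1)).2
    _ < toLex ((intervals e a b y (n + 1)).1, true) :=
        hxy ▸ (Prod.Lex.toLex_false_covBy_toLex_true _).lt
    _ ≤ (F y).1 := (hF y (n + 1)).1

theorem injective_of_forall_mem_cell_intervals : Function.Injective F := by
  intro x y hxy
  by_contra hne
  set n := PiNat.firstDiff x y
  have hx : x ∈ PiNat.cylinder y n := fun _ hi => PiNat.apply_eq_of_lt_firstDiff hi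
  have hy : y ∈ PiNat.cylinder x n := fun _ hi => (PiNat.apply_eq_of_lt_firstDiff hi).symm
  obtain ⟨hxn, hyn⟩ | ⟨hyn, hxn⟩ : x n = false ∧ y n = true ∨ y n = false ∧ x n = true := by
    have := PiNat.apply_firstDiff_ne hne
    revert this; cases x n <;> cases y n <;> decide
  · exact (lt_of_forall_mem_cell_intervals hF hy hxn hyn).ne hxy
  · exact (lt_of_forall_mem_cell_intervals hF hx hyn hxn).ne' hxy

theorem range_eq_cell_of_forall_mem_cell_intervals (hd : DenseRange e) (hab : a < b) :
    Set.range F = cell _ a b := by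
  refine subset_antisymm (Set.range_subset_iff.2 fun x => hF x 0) fun w hw => ?_
  let choice : ℝ × ℝ → Bool := fun p => decide (toLex (pivot e p.1 p.2, false) < w.1)
  have hw' : ∀ n,
      w ∈ cell _ (adaptiveIntervals e a b choice n).1 (adaptiveIntervals e a b choice n).2 := by
    intro n
    induction n with
    | zero => exact hw
    | succ n ih => exact mem_cell_step ih
  refine ⟨fun n => choice (adaptiveIntervals e a b choice n),
    eq_of_forall_mem_cell_intervals hF hd hab ?_⟩
  rwa [intervals_adaptiveIntervals]

end CantorMap

end RGamma

/-- for `Γ ⊂ ℝ` countable and dense, the sets `[a₊, b₋]` (`a, b ∈ Γ`, `a < b`)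
form a countable basis of compact open sets for the order topology on `ℝ_Γ`, and each such
set is a Cantor set (homeomorphic to the Cantor space `ℕ → Bool`). -/
theorem RGamma_basis_cantor (Γ : Set ℝ) (hc : Γ.Countable) (hd : Dense Γ) :
    IsTopologicalBasis {S : Set (RGamma Γ) | ∃ a, ∃ ha : a ∈ Γ, ∃ b, ∃ hb : b ∈ Γ,
        a < b ∧ S = Set.Icc (RGamma.plus Γ a ha) (RGamma.minus Γ b hb)} ∧
    Set.Countable {S : Set (RGamma Γ) | ∃ a, ∃ ha : a ∈ Γ, ∃ b, ∃ hb : b ∈ Γ,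
        a < b ∧ S = Set.Icc (RGamma.plus Γ a ha) (RGamma.minus Γ b hb)} ∧
    ∀ a, ∀ ha : a ∈ Γ, ∀ b, ∀ hb : b ∈ Γ, a < b →
      IsCompact (Set.Icc (RGamma.plus Γ a ha) (RGamma.minus Γ b hb)) ∧
      IsOpen (Set.Icc (RGamma.plus Γ a ha) (RGamma.minus Γ b hb)) ∧
      Nonempty (↥(Set.Icc (RGamma.plus Γ a ha) (RGamma.minus Γ b hb)) ≃ₜ (ℕ → Bool)) := by
  refine ⟨RGamma.isTopologicalBasis_Icc_plus_minus hd, ?_, fun a ha b hb hab => ?_⟩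
  · have := hc.to_subtype
    refine (Set.countable_range fun p : Γ × Γ =>
      Set.Icc (RGamma.plus Γ p.1 p.1.2) (RGamma.minus Γ p.2 p.2.2)).mono ?_
    rintro _ ⟨a, ha, b, hb, -, rfl⟩
    exact ⟨(⟨a, ha⟩, ⟨b, hb⟩), rfl⟩
  obtain ⟨e, rfl⟩ := hc.exists_eq_range hd.nonempty
  choose F hF using RGamma.exists_forall_mem_cell_intervals hd ha hb hab
  have hFc := RGamma.continuous_of_forall_mem_cell_intervals hF hd hab
  have hFr := RGamma.range_eq_cell_of_forall_mem_cell_intervals hF hd hab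
  rw [RGamma.Icc_plus_minus, ← hFr]
  refine ⟨isCompact_range hFc, hFr ▸ RGamma.isOpen_cell ha hb, ⟨?_⟩⟩
  exact (hFc.isClosedEmbedding (RGamma.injective_of_forall_mem_cell_intervals hF)).toHomeomorph.symm
end

section
/- Let λ ∈ (0,1) be an algebraic number with minimal polynomial f(t) = t^d + a_{d-1}t^{d-1} + ... + a_0 over ℚ with integer coefficients. If d = 1 (so λ = p/q rational in lowest terms), then the quotient group ℤ[λ, λ⁻¹] / (1−λ)ℤ[λ, λ⁻¹] is a cyclic group of order |f(1)| (interpreting order 0 as infinite, and |f(1)| with f the integer minimal polynomial qt − p, so the quotient is ℤ/(q−p)ℤ). -/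
/-- for a rational `λ = p/q` in lowest terms (degree 1 algebraic number with
integer minimal polynomial `f(t) = qt − p`), the quotient `ℤ[λ,λ⁻¹]/(1−λ)ℤ[λ,λ⁻¹]` is cyclic
of order `|f(1)| = |q − p|`, i.e. isomorphic to `ℤ/(q−p)ℤ`. -/
theorem stein_H0_degree_one (p q : ℤ) (hp : p ≠ 0) (hq : 0 < q) (hcop : IsCoprime p q)
    (lam : ℝ) (hlam : lam = (p : ℝ) / (q : ℝ)) :
    Nonempty
      ((↥(Subring.closure {lam, lam⁻¹} : Subring ℝ).toAddSubgroup ⧸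
          (((Subring.closure {lam, lam⁻¹} : Subring ℝ).toAddSubgroup.map
              (AddMonoidHom.mulLeft (1 - lam))).addSubgroupOf
            (Subring.closure {lam, lam⁻¹} : Subring ℝ).toAddSubgroup)) ≃+
        ZMod (q - p).natAbs) := by
  classical
  have hq0 : (q : ℝ) ≠ 0 := Int.cast_ne_zero.mpr hq.ne'
  have hp0 : (p : ℝ) ≠ 0 := Int.cast_ne_zero.mpr hp
  have hpq : (p * q : ℤ) ≠ 0 := mul_ne_zero hp hq.ne'
  set S : Subring ℝ := Subring.closure {lam, lam⁻¹} with hSdef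
  set N : ℕ := (q - p).natAbs with hNdef
  set A := Localization.Away (p * q : ℤ) with hAdef
  set F : ℤ →+* A := algebraMap ℤ A with hFdef
  -- g : A →+* ℝ
  have hur : IsUnit ((Int.castRingHom ℝ) (p * q)) := by
    simpa using isUnit_iff_ne_zero.mpr (by exact_mod_cast hpq : ((p*q : ℤ) : ℝ) ≠ 0)
  set g : A →+* ℝ := IsLocalization.Away.lift (g := Int.castRingHom ℝ) (p * q) hur with hgdef
  have hgF : ∀ m : ℤ, g (F m) = (m : ℝ) := fun m => by
    simp [hgdef, hFdef, IsLocalization.Away.lift_eq]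
  -- g injective
  have hginj : Function.Injective g := by
    rw [injective_iff_map_eq_zero]
    intro a ha
    obtain ⟨⟨m, s⟩, hms⟩ := IsLocalization.surj (Submonoid.powers (p * q : ℤ)) a
    have h1 : g a * g (F s) = g (F m) := by rw [← map_mul]; exact congrArg g hms
    rw [ha, zero_mul, hgF] at h1
    have hm : m = 0 := by exact_mod_cast h1.symm
    have hsu : IsUnit (F (s : ℤ)) := IsLocalization.map_units A s
    have : a * F (s : ℤ) = 0 := by rw [hms, hm, map_zero]
    exact (hsu.mul_left_eq_zero).mp this
  -- membership facts about S
  obtain ⟨a, b, hab⟩ := hcop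
  have habR : (a : ℝ) * p + b * q = 1 := by exact_mod_cast congrArg (Int.cast : ℤ → ℝ) hab
  have hlmem : lam ∈ S := Subring.subset_closure (Or.inl rfl)
  have hlimem : lam⁻¹ ∈ S := Subring.subset_closure (Or.inr rfl)
  have hlaminv : lam⁻¹ = (q : ℝ) / p := by rw [hlam, inv_div]
  have hqinv : (q : ℝ)⁻¹ ∈ S := by
    have h1 : ((a : ℝ) * lam + b) * q = 1 := by
      rw [hlam]; field_simp; linear_combination habR
    rw [← eq_inv_of_mul_eq_one_left h1]
    exact S.add_mem (S.mul_mem (intCast_mem S a) hlmem) (intCast_mem S b)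
  have hpinv : (p : ℝ)⁻¹ ∈ S := by
    have h1 : ((b : ℝ) * lam⁻¹ + a) * p = 1 := by
      rw [hlaminv]; field_simp; linear_combination habR
    rw [← eq_inv_of_mul_eq_one_left h1]
    exact S.add_mem (S.mul_mem (intCast_mem S b) hlimem) (intCast_mem S a)
  have hpqinv : ((p * q : ℤ) : ℝ)⁻¹ ∈ S := by
    push_cast
    rw [mul_inv]
    exact S.mul_mem hpinv hqinv
  -- range g ⊆ S
  have hrange_le : g.range ≤ S := by
    rintro x ⟨c, rfl⟩
    obtain ⟨⟨m, s⟩, hms⟩ := IsLocalization.surj (Submonoid.powers (p * q : ℤ)) c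
    obtain ⟨k, hk⟩ := s.2
    have h1 : g c * g (F s) = g (F m) := by rw [← map_mul]; exact congrArg g hms
    rw [hgF, hgF] at h1
    have hs : ((s : ℤ) : ℝ) = ((p * q : ℤ) : ℝ) ^ k := by rw [← hk]; push_cast; ring
    have hne : ((p * q : ℤ) : ℝ) ^ k ≠ 0 := pow_ne_zero _ (by exact_mod_cast hpq)
    have hgc : g c = (m : ℝ) * (((p * q : ℤ) : ℝ) ^ k)⁻¹ := by
      rw [eq_mul_inv_iff_mul_eq₀ hne, ← hs]; exact h1
    rw [hgc, ← inv_pow]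
    exact S.mul_mem (intCast_mem S m) (S.pow_mem hpqinv k)
  -- the inverse of F (p*q) in A
  have hualg : IsUnit (F (p * q)) := IsLocalization.Away.algebraMap_isUnit (p * q)
  set w : Aˣ := hualg.unit with hwdef
  have hw1 : (w : A) = F (p * q) := rfl
  have hginvu : g (↑w⁻¹) = ((p * q : ℤ) : ℝ)⁻¹ := by
    have h1 : g (↑w⁻¹) * g (F (p * q)) = 1 := by
      rw [← map_mul, ← hw1, Units.inv_mul, map_one]
    rw [hgF] at h1
    field_simp at h1 ⊢
    linarith [h1]
  -- S ⊆ range g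
  have hle : S ≤ g.range := by
    rw [hSdef]
    apply (Subring.closure_le).mpr
    rintro x (rfl | rfl)
    · refine ⟨F (p ^ 2) * ↑w⁻¹, ?_⟩
      rw [map_mul, hgF, hginvu, hlam]
      push_cast
      field_simp
    · refine ⟨F (q ^ 2) * ↑w⁻¹, ?_⟩
      rw [map_mul, hgF, hginvu, hlaminv]
      push_cast
      field_simp
  have hS : S = g.range := le_antisymm hle hrange_le
  -- (p*q) is a unit mod N
  have hcop1 : IsCoprime p (q - p) := ⟨a + b, b, by linear_combination hab⟩
  have hcop2 : IsCoprime q (q - p) := ⟨a + b, -a, by linear_combination hab⟩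
  have hcop3 : IsCoprime (p * q) (q - p) := hcop1.mul_left hcop2
  have hN0 : ((q - p : ℤ) : ZMod N) = 0 := by
    rw [ZMod.intCast_zmod_eq_zero_iff_dvd]
    exact Int.natAbs_dvd.mpr dvd_rfl
  have hunit : IsUnit ((Int.castRingHom (ZMod N)) (p * q)) := by
    have := hcop3.map (Int.castRingHom (ZMod N))
    rw [map_sub] at this
    simp only [Int.coe_castRingHom] at this ⊢
    rw [show ((q : ZMod N) - (p : ZMod N)) = 0 by push_cast at hN0 ⊢; exact hN0] at this
    exact isCoprime_zero_right.mp this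
  set h : A →+* ZMod N := IsLocalization.Away.lift (g := Int.castRingHom (ZMod N)) (p * q) hunit
    with hhdef
  have hhF : ∀ m : ℤ, h (F m) = (m : ZMod N) := fun m => by
    simp [hhdef, hFdef, IsLocalization.Away.lift_eq]
  -- kernel of h is (q - p) * A
  have hker : ∀ c : A, h c = 0 ↔ ∃ d : A, c = F (q - p) * d := by
    intro c
    constructor
    · intro hc
      obtain ⟨⟨m, s⟩, hms⟩ := IsLocalization.surj (Submonoid.powers (p * q : ℤ)) c
      have h1 : h c * h (F s) = h (F m) := by rw [← map_mul]; exact congrArg h hms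
      rw [hc, zero_mul, hhF] at h1
      have hdvd : (q - p) ∣ m := by
        rw [← Int.natAbs_dvd, ← hNdef]
        exact_mod_cast (ZMod.intCast_zmod_eq_zero_iff_dvd m N).mp h1.symm
      obtain ⟨d₀, hd₀⟩ := hdvd
      have hsu : IsUnit (F (s : ℤ)) := IsLocalization.map_units A s
      refine ⟨F d₀ * ↑hsu.unit⁻¹, ?_⟩
      have hcu : c * ↑hsu.unit = F m := hms
      have hc' : c = F m * ↑hsu.unit⁻¹ := (Units.eq_mul_inv_iff_mul_eq hsu.unit).mpr hcu
      rw [hc', hd₀, map_mul, mul_assoc]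
    · rintro ⟨d, rfl⟩
      rw [map_mul, hhF]
      push_cast at hN0 ⊢
      rw [hN0, zero_mul]
  -- τ = p/(pq) is a unit of A, with inverse F q
  set τ : A := F p * ↑w⁻¹ with hτdef
  have hτq : τ * F q = 1 := by
    have h1 : τ * F q = F (p * q) * ↑w⁻¹ := by rw [hτdef, map_mul]; ring
    rw [h1, ← hw1, Units.mul_inv]
  set τu : Aˣ := ⟨τ, F q, hτq, by rw [mul_comm]; exact hτq⟩ with hτudef
  have hτuval : (↑τu : A) = τ := rfl
  have hgτ : g τ = (q : ℝ)⁻¹ := by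
    rw [hτdef, map_mul, hgF, hginvu]
    push_cast
    field_simp
  have hα : g (F (q - p) * τ) = 1 - lam := by
    rw [map_mul, hgF, hgτ, hlam]
    push_cast
    field_simp
  have hhα : h (F (q - p) * τ) = 0 := by
    rw [map_mul, hhF]
    push_cast at hN0 ⊢
    rw [hN0, zero_mul]
  -- the ring equivalence A ≃ range g
  have hrrbij : Function.Bijective g.rangeRestrict :=
    ⟨fun x y hxy => hginj (congrArg Subtype.val hxy), g.rangeRestrict_surjective⟩
  set e : A ≃+* g.range := RingEquiv.ofBijective g.rangeRestrict hrrbij with hedef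
  have hsymm : ∀ (x : g.range) (c : A), g c = x → e.symm x = c := by
    intro x c hc
    apply e.injective
    rw [RingEquiv.apply_symm_apply]
    exact Subtype.ext hc.symm
  rw [hS]
  refine ⟨?_⟩
  set G := g.range.toAddSubgroup with hGdef
  have hmemG : ∀ x : ℝ, x ∈ G ↔ x ∈ g.range := fun x => Iff.rfl
  set inc : ↥G →+ g.range :=
    { toFun := fun x => ⟨x.1, (hmemG _).mp x.2⟩, map_zero' := rfl,
      map_add' := fun x y => rfl } with hincdef
  set ψ : ↥G →+ ZMod N :=
    ((h.comp (e.symm : g.range ≃+* A).toRingHom).toAddMonoidHom).comp inc with hψdef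
  have hψapp : ∀ x : ↥G, ψ x = h (e.symm (inc x)) := fun x => rfl
  have hval : ∀ x : ↥G, g (e.symm (inc x)) = x.1 :=
    fun x => congrArg Subtype.val (e.apply_symm_apply (inc x))
  have hψs : Function.Surjective ψ := by
    intro z
    obtain ⟨m, rfl⟩ := ZMod.intCast_surjective z
    have hmem : (m : ℝ) ∈ g.range := ⟨F m, hgF m⟩
    refine ⟨⟨(m : ℝ), (hmemG _).mpr hmem⟩, ?_⟩
    rw [hψapp, hsymm _ (F m) (hgF m), hhF]
  have hψker : ψ.ker = (G.map (AddMonoidHom.mulLeft (1 - lam))).addSubgroupOf G := by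
    ext x
    simp only [AddMonoidHom.mem_ker, AddSubgroup.mem_addSubgroupOf, AddSubgroup.mem_map,
      AddMonoidHom.coe_mulLeft]
    constructor
    · intro hx
      rw [hψapp] at hx
      obtain ⟨d, hd⟩ := (hker _).mp hx
      refine ⟨g (↑τu⁻¹ * d), (hmemG _).mpr ⟨_, rfl⟩, ?_⟩
      rw [← hα, ← map_mul]
      have h2 : (F (q - p) * τ) * (↑τu⁻¹ * d) = e.symm (inc x) := by
        have h3 : (F (q - p) * τ) * (↑τu⁻¹ * d) = F (q - p) * d * (τ * ↑τu⁻¹) := by ring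
        have h4 : τ * ↑τu⁻¹ = 1 := by rw [← hτuval]; exact τu.mul_inv
        rw [h3, h4, mul_one, hd]
      rw [h2]
      exact hval x
    · rintro ⟨y, hy, hxy⟩
      obtain ⟨d, rfl⟩ := (hmemG y).mp hy
      have hx1 : g (F (q - p) * τ * d) = (inc x : ℝ) := by
        rw [map_mul, hα]
        exact hxy
      rw [hψapp, hsymm (inc x) (F (q - p) * τ * d) hx1, map_mul, hhα, zero_mul]
  exact hψker ▸ QuotientAddGroup.quotientKerEquivOfSurjective ψ hψs
end

section
/- Let n₁, ..., n_k ≥ 2 be integers and let Γ = ℤ[1/(n₁⋯n_k)]. Let N = Σᵢ (1−nᵢ)Γ be the subgroup of Γ generated by the images of multiplication by each (1−nᵢ). Then Γ/N ≅ ℤ/dℤ where d = gcd(n₁−1, ..., n_k−1). -/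
/-!
Write `P = ∏ nᵢ` and `d = gcd (nᵢ - 1)`. Since `d` is an integer combination of the `nᵢ - 1`, the
subgroup `N` is exactly `dΓ`. Every `x ∈ Γ` has the form `b / Pᵐ`, and `P` is coprime to `d`
(each `nᵢ ≡ 1 mod d`), so `x ≡ u b mod dΓ` for an inverse `u` of `Pᵐ` mod `d`: the map
`ℤ → Γ/dΓ` is onto. An integer `a` lies in `dΓ` iff `d ∣ Pᵐ a` for some `m`, i.e. iff `d ∣ a`.
Hence `Γ/N ≅ ℤ/dℤ`.
-/

open Finset

theorem Int.natCast_finset_gcd {ι : Type*} (s : Finset ι) (f : ι → ℕ) :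
    ((s.gcd f : ℕ) : ℤ) = s.gcd fun i => (f i : ℤ) := by
  classical
  induction s using Finset.induction with
  | empty => simp
  | insert a s _ ih =>
    rw [gcd_insert, gcd_insert, ← ih, ← Int.coe_gcd, Int.gcd_natCast_natCast]
    rfl

theorem Nat.coprime_prod_gcd_sub_one {ι : Type*} (s : Finset ι) (n : ι → ℕ)
    (hn : ∀ i ∈ s, 1 ≤ n i) : (∏ i ∈ s, n i).Coprime (s.gcd fun i => n i - 1) :=
  Nat.Coprime.prod_left fun i hi =>
    ((Nat.coprime_self_sub_right (hn i hi)).2 (Nat.coprime_one_right _)).coprime_dvd_right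
      (Finset.gcd_dvd hi)

namespace Subring

variable {R : Type*} [CommRing R]

theorem map_mulLeft_neg (Γ : Subring R) (c : R) :
    Γ.toAddSubgroup.map (AddMonoidHom.mulLeft (-c)) =
      Γ.toAddSubgroup.map (AddMonoidHom.mulLeft c) := by
  ext z
  constructor <;> rintro ⟨y, hy, rfl⟩ <;> exact ⟨-y, neg_mem hy, by simp⟩

theorem iSup_map_mulLeft_natCast {ι : Type*} [Fintype ι] (Γ : Subring R) (a : ι → ℕ) :
    ⨆ i, Γ.toAddSubgroup.map (AddMonoidHom.mulLeft (a i : R)) =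
      Γ.toAddSubgroup.map (AddMonoidHom.mulLeft ((univ.gcd a : ℕ) : R)) := by
  apply le_antisymm
  · refine iSup_le fun i => ?_
    rintro _ ⟨y, hy, rfl⟩
    obtain ⟨q, hq⟩ := gcd_dvd (mem_univ i) (f := a)
    exact ⟨q * y, Γ.mul_mem (natCast_mem Γ q) hy, by simp [hq, mul_assoc]⟩
  · rintro _ ⟨y, hy, rfl⟩
    obtain ⟨g, hg⟩ := gcd_eq_sum_mul univ fun i => (a i : ℤ)
    have hgcd : ((univ.gcd a : ℕ) : R) = ∑ i, (a i : R) * (g i : R) := by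
      rw [← Int.cast_natCast, Int.natCast_finset_gcd, hg]
      push_cast
      rfl
    rw [AddMonoidHom.coe_mulLeft, hgcd, sum_mul]
    refine sum_mem fun i _ => AddSubgroup.mem_iSup_of_mem i ⟨g i * y, ?_, by simp [mul_assoc]⟩
    exact Γ.mul_mem (intCast_mem Γ _) hy

end Subring

section ClosureInv

variable {K : Type*} [Field K]

theorem exists_pow_mul_mem_closure_of_mem_closure_inv {r x : K} (hr : r ≠ 0)
    (hx : x ∈ Subring.closure {r⁻¹}) : ∃ m : ℕ, r ^ m * x ∈ Subring.closure {r} := by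
  have hr_mem : r ∈ Subring.closure {r} := Subring.subset_closure rfl
  induction hx using Subring.closure_induction with
  | mem x hx =>
    rw [Set.mem_singleton_iff.1 hx]
    exact ⟨1, by simp [hr, one_mem]⟩
  | zero => exact ⟨0, by simp [zero_mem]⟩
  | one => exact ⟨0, by simp [one_mem]⟩
  | add x y _ _ hx hy =>
    obtain ⟨m, hm⟩ := hx
    obtain ⟨l, hl⟩ := hy
    refine ⟨m + l, ?_⟩
    have : r ^ (m + l) * (x + y) = r ^ l * (r ^ m * x) + r ^ m * (r ^ l * y) := by ring
    rw [this]
    exact add_mem (mul_mem (pow_mem hr_mem l) hm) (mul_mem (pow_mem hr_mem m) hl)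
  | neg x _ hx =>
    obtain ⟨m, hm⟩ := hx
    exact ⟨m, by simpa using neg_mem hm⟩
  | mul x y _ _ hx hy =>
    obtain ⟨m, hm⟩ := hx
    obtain ⟨l, hl⟩ := hy
    exact ⟨m + l, by rw [pow_add, mul_mul_mul_comm]; exact mul_mem hm hl⟩

theorem exists_pow_mul_eq_intCast_of_mem_closure_inv {P : ℕ} (hP : (P : K) ≠ 0) {x : K}
    (hx : x ∈ Subring.closure {(P : K)⁻¹}) : ∃ (m : ℕ) (b : ℤ), (P : K) ^ m * x = b := by
  obtain ⟨m, hm⟩ := exists_pow_mul_mem_closure_of_mem_closure_inv hP hx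
  have hle : Subring.closure {(P : K)} ≤ ⊥ :=
    Subring.closure_le.2 (Set.singleton_subset_iff.2 (natCast_mem _ P))
  obtain ⟨b, hb⟩ := Subring.mem_bot.1 (hle hm)
  exact ⟨m, b, hb.symm⟩

variable [CharZero K] {P d : ℕ}

theorem exists_intCast_sub_mem_map_mulLeft (hP : P ≠ 0) (hPd : P.Coprime d) {x : K}
    (hx : x ∈ Subring.closure {(P : K)⁻¹}) : ∃ a : ℤ,
      x - a ∈ (Subring.closure {(P : K)⁻¹}).toAddSubgroup.map (AddMonoidHom.mulLeft (d : K)) := by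
  obtain ⟨m, b, hb⟩ := exists_pow_mul_eq_intCast_of_mem_closure_inv (Nat.cast_ne_zero.2 hP) hx
  obtain ⟨u, v, huv⟩ : IsCoprime ((P : ℤ) ^ m) d := by
    exact_mod_cast Nat.isCoprime_iff_coprime.2 (hPd.pow_left m)
  have huvK : (u : K) * (P : K) ^ m + v * d = 1 := by exact_mod_cast huv
  refine ⟨u * b, v * x, Subring.mul_mem _ (intCast_mem _ v) hx, ?_⟩
  simp only [AddMonoidHom.coe_mulLeft, Int.cast_mul]
  linear_combination x * huvK - u * hb

theorem intCast_mem_map_mulLeft_iff (hP : P ≠ 0) (hPd : P.Coprime d) (a : ℤ) :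
    (a : K) ∈ (Subring.closure {(P : K)⁻¹}).toAddSubgroup.map (AddMonoidHom.mulLeft (d : K)) ↔
      (d : ℤ) ∣ a := by
  constructor
  · rintro ⟨y, hy, hya⟩
    obtain ⟨m, b, hb⟩ := exists_pow_mul_eq_intCast_of_mem_closure_inv (Nat.cast_ne_zero.2 hP) hy
    have hK : (P : K) ^ m * a = d * b := by
      rw [← hya, AddMonoidHom.coe_mulLeft, mul_left_comm, hb]
    have hZ : (P : ℤ) ^ m * a = d * b := by exact_mod_cast hK
    have hcop : IsCoprime (d : ℤ) ((P : ℤ) ^ m) := by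
      exact_mod_cast Nat.isCoprime_iff_coprime.2 (hPd.pow_left m).symm
    exact hcop.dvd_of_dvd_mul_left ⟨b, hZ⟩
  · rintro ⟨c, rfl⟩
    exact ⟨c, intCast_mem (Subring.closure _) c, by simp⟩

noncomputable def closureInvQuotientEquivZMod (hP : P ≠ 0) (hPd : P.Coprime d) :
    (Subring.closure {(P : K)⁻¹}).toAddSubgroup ⧸
        ((Subring.closure {(P : K)⁻¹}).toAddSubgroup.map
            (AddMonoidHom.mulLeft (d : K))).addSubgroupOf
          (Subring.closure {(P : K)⁻¹}).toAddSubgroup ≃+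
      ZMod d :=
  let f := (QuotientAddGroup.mk' _).comp (zmultiplesHom _ ⟨1, one_mem (Subring.closure _)⟩)
  have hf : ∀ a : ℤ, f a = QuotientAddGroup.mk (⟨a, intCast_mem (Subring.closure _) a⟩ :
      (Subring.closure {(P : K)⁻¹}).toAddSubgroup) :=
    fun a => congrArg QuotientAddGroup.mk (Subtype.ext (by simp))
  have hsurj : Function.Surjective f := by
    intro q
    obtain ⟨⟨x, hx⟩, rfl⟩ := QuotientAddGroup.mk_surjective q
    obtain ⟨a, ha⟩ := exists_intCast_sub_mem_map_mulLeft hP hPd hx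
    refine ⟨a, ?_⟩
    rw [hf, QuotientAddGroup.eq, AddSubgroup.mem_addSubgroupOf, AddSubgroup.coe_add,
      AddSubgroup.coe_neg, neg_add_eq_sub]
    exact ha
  have hker : f.ker = AddSubgroup.zmultiples (d : ℤ) := by
    ext a
    rw [AddMonoidHom.mem_ker, hf, QuotientAddGroup.eq_zero_iff, AddSubgroup.mem_addSubgroupOf,
      Int.mem_zmultiples_iff]
    exact intCast_mem_map_mulLeft_iff hP hPd a
  (QuotientAddGroup.quotientKerEquivOfSurjective f hsurj).symm.trans <|
    (QuotientAddGroup.quotientAddEquivOfEq hker).trans (Int.quotientZMultiplesNatEquivZMod d)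

end ClosureInv

theorem stein_integral_H0_general (k : ℕ) (n : Fin k → ℕ) (hn : ∀ i, 2 ≤ n i) :
    Nonempty
      ((↥(Subring.closure {(((∏ i, n i : ℕ) : ℝ))⁻¹} : Subring ℝ).toAddSubgroup ⧸
          ((⨆ i : Fin k,
              (Subring.closure {(((∏ i, n i : ℕ) : ℝ))⁻¹} : Subring ℝ).toAddSubgroup.map
                (AddMonoidHom.mulLeft (1 - (n i : ℝ)))).addSubgroupOf
            (Subring.closure {(((∏ i, n i : ℕ) : ℝ))⁻¹} : Subring ℝ).toAddSubgroup)) ≃+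
        ZMod (Finset.univ.gcd fun i => n i - 1)) := by
  have hn1 : ∀ i, 1 ≤ n i := fun i => one_le_two.trans (hn i)
  have hN : ⨆ i : Fin k, (Subring.closure {(((∏ i, n i : ℕ) : ℝ))⁻¹}).toAddSubgroup.map
        (AddMonoidHom.mulLeft (1 - (n i : ℝ))) =
      (Subring.closure {(((∏ i, n i : ℕ) : ℝ))⁻¹}).toAddSubgroup.map
        (AddMonoidHom.mulLeft ((univ.gcd fun i => n i - 1 : ℕ) : ℝ)) := by
    rw [← Subring.iSup_map_mulLeft_natCast]
    refine iSup_congr fun i => ?_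
    rw [← Subring.map_mulLeft_neg, Nat.cast_sub (hn1 i), Nat.cast_one, neg_sub]
  rw [hN]
  have hP : ∏ i, n i ≠ 0 := prod_ne_zero_iff.2 fun i _ => Nat.one_le_iff_ne_zero.1 (hn1 i)
  exact ⟨closureInvQuotientEquivZMod hP (Nat.coprime_prod_gcd_sub_one univ n fun i _ => hn1 i)⟩

/-- for integers `n₁,…,n_k ≥ 2`, with `Γ = ℤ[1/(n₁⋯n_k)]` and
`N = Σᵢ (1−nᵢ)Γ`, we have `Γ/N ≅ ℤ/dℤ` where `d = gcd(n₁−1, …, n_k−1)`. -/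
theorem stein_integral_H0 (k : ℕ) (hk : 0 < k) (n : Fin k → ℕ) (hn : ∀ i, 2 ≤ n i) :
    Nonempty
      ((↥(Subring.closure {(((∏ i, n i : ℕ) : ℝ))⁻¹} : Subring ℝ).toAddSubgroup ⧸
          ((⨆ i : Fin k,
              (Subring.closure {(((∏ i, n i : ℕ) : ℝ))⁻¹} : Subring ℝ).toAddSubgroup.map
                (AddMonoidHom.mulLeft (1 - (n i : ℝ)))).addSubgroupOf
            (Subring.closure {(((∏ i, n i : ℕ) : ℝ))⁻¹} : Subring ℝ).toAddSubgroup)) ≃+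
        ZMod (Finset.univ.gcd fun i => n i - 1)) :=
  stein_integral_H0_general k n hn
end

section
/- Let λ be an algebraic number that is a root of the integer polynomial f(t) = t² + a₁t + a₀ with a₀ ≠ 1, λ ∉ ℚ. Then the abelian group ℤ[λ, λ⁻¹]/(1−λ)ℤ[λ,λ⁻¹] is a finite cyclic group of order |f(1)| = |1 + a₁ + a₀| (when f(1) ≠ 0). -/
/-- let `λ` be an irrational root of `f(t) = t² + a₁t + a₀` with integer
coefficients, `a₀ = ±1` (so that `λ⁻¹ ∈ ℤ[λ]`) and `a₀ ≠ 1`, and suppose `f(1) ≠ 0`. Then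
the additive group `ℤ[λ,λ⁻¹]/(1−λ)ℤ[λ,λ⁻¹]` is finite cyclic of order `|f(1)| = |1+a₁+a₀|`. -/
theorem stein_H0_degree_two (a0 a1 : ℤ) (ha0 : a0 = 1 ∨ a0 = -1) (ha0ne : a0 ≠ 1)
    (lam : ℝ) (hroot : lam ^ 2 + (a1 : ℝ) * lam + (a0 : ℝ) = 0)
    (hirr : Irrational lam) (hf1 : 1 + a1 + a0 ≠ 0) :
    Nonempty
      ((↥(Subring.closure {lam, lam⁻¹} : Subring ℝ).toAddSubgroup ⧸
          (((Subring.closure {lam, lam⁻¹} : Subring ℝ).toAddSubgroup.map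
              (AddMonoidHom.mulLeft (1 - lam))).addSubgroupOf
            (Subring.closure {lam, lam⁻¹} : Subring ℝ).toAddSubgroup)) ≃+
        ZMod (1 + a1 + a0).natAbs) := by
  obtain rfl | rfl := ha0
  · exact absurd rfl ha0ne
  clear ha0ne hf1
  have hroot' : lam ^ 2 + (a1 : ℝ) * lam - 1 = 0 := by push_cast at hroot; linarith
  have hlamsq : lam ^ 2 = 1 - (a1 : ℝ) * lam := by linarith
  have hlamne : lam ≠ 0 := by
    intro h; rw [h] at hroot'; norm_num at hroot'
  have hinv : lam⁻¹ = lam + a1 := by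
    have h1 : (lam + a1) * lam = 1 := by nlinarith [hlamsq]
    exact (eq_inv_of_mul_eq_one_left h1).symm
  -- uniqueness of coordinates
  have hU : ∀ x y x' y' : ℤ, (x : ℝ) + y * lam = x' + y' * lam → x = x' ∧ y = y' := by
    intro x y x' y' h
    by_cases hy : y = y'
    · subst hy
      refine ⟨?_, rfl⟩
      have : (x : ℝ) = x' := by linarith
      exact_mod_cast this
    · exfalso
      apply hirr
      refine ⟨(x - x' : ℚ) / (y' - y : ℚ), ?_⟩
      have hyy : ((y' : ℝ) - y) ≠ 0 := by
        intro h0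
        apply hy
        have : (y : ℝ) = y' := by linarith
        exact_mod_cast this
      push_cast
      field_simp
      linarith
  -- the explicit subring
  let S : Subring ℝ :=
    { carrier := {r : ℝ | ∃ x y : ℤ, r = (x : ℝ) + y * lam}
      one_mem' := ⟨1, 0, by push_cast; ring⟩
      zero_mem' := ⟨0, 0, by push_cast; ring⟩
      add_mem' := by
        rintro r s ⟨x, y, rfl⟩ ⟨u, v, rfl⟩
        exact ⟨x + u, y + v, by push_cast; ring⟩
      neg_mem' := by
        rintro r ⟨x, y, rfl⟩
        exact ⟨-x, -y, by push_cast; ring⟩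
      mul_mem' := by
        rintro r s ⟨x, y, rfl⟩ ⟨u, v, rfl⟩
        refine ⟨x * u + y * v, x * v + y * u - a1 * y * v, ?_⟩
        push_cast
        linear_combination (y : ℝ) * (v : ℝ) * hlamsq }
  have hRS : (Subring.closure {lam, lam⁻¹} : Subring ℝ) = S := by
    apply le_antisymm
    · rw [Subring.closure_le]
      rintro r (rfl | rfl)
      · exact ⟨0, 1, by push_cast; ring⟩
      · exact ⟨a1, 1, by rw [hinv]; push_cast; ring⟩
    · rintro r ⟨x, y, rfl⟩
      have hl : lam ∈ Subring.closure {lam, lam⁻¹} := Subring.subset_closure (by simp)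
      exact add_mem (intCast_mem _ x) (mul_mem (intCast_mem _ y) hl)
  rw [hRS]
  have han : (1 : ℤ) + a1 + -1 = a1 := by ring
  rw [han]
  -- coordinates
  have hmem : ∀ r : ↥S.toAddSubgroup, ∃ x y : ℤ, (r : ℝ) = (x : ℝ) + y * lam := fun r => r.2
  choose c1 c2 hc using hmem
  have hadd : ∀ r s : ↥S.toAddSubgroup,
      ((c1 (r + s) + c2 (r + s) : ℤ) : ZMod a1.natAbs)
        = ((c1 r + c2 r : ℤ) : ZMod a1.natAbs) + ((c1 s + c2 s : ℤ) : ZMod a1.natAbs) := by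
    intro r s
    have h : ((r + s : ↥S.toAddSubgroup) : ℝ)
        = ((c1 r + c1 s : ℤ) : ℝ) + ((c2 r + c2 s : ℤ) : ℝ) * lam := by
      push_cast
      rw [hc r, hc s]; ring
    obtain ⟨h1, h2⟩ := hU _ _ _ _ ((hc (r + s)).symm.trans h)
    rw [h1, h2]
    push_cast
    ring
  let φ : ↥S.toAddSubgroup →+ ZMod a1.natAbs :=
    AddMonoidHom.mk' (fun r => ((c1 r + c2 r : ℤ) : ZMod a1.natAbs)) hadd
  have hspec : ∀ (r : ↥S.toAddSubgroup) (x y : ℤ), (r : ℝ) = (x : ℝ) + y * lam →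
      φ r = ((x + y : ℤ) : ZMod a1.natAbs) := by
    intro r x y hxy
    obtain ⟨h1, h2⟩ := hU _ _ _ _ ((hc r).symm.trans hxy)
    show ((c1 r + c2 r : ℤ) : ZMod a1.natAbs) = _
    rw [h1, h2]
  have hsurj : Function.Surjective φ := by
    intro k
    obtain ⟨z, rfl⟩ := ZMod.intCast_surjective k
    refine ⟨⟨(z : ℝ), ⟨z, 0, by push_cast; ring⟩⟩, ?_⟩
    rw [hspec ⟨(z : ℝ), ⟨z, 0, by push_cast; ring⟩⟩ z 0 (by push_cast; ring)]
    push_cast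
    ring
  have hker : ((S.toAddSubgroup.map (AddMonoidHom.mulLeft (1 - lam))).addSubgroupOf
      S.toAddSubgroup) = φ.ker := by
    ext r
    rw [AddSubgroup.mem_addSubgroupOf, AddSubgroup.mem_map, AddMonoidHom.mem_ker]
    constructor
    · rintro ⟨s, ⟨u, v, rfl⟩, hs⟩
      have heq : (r : ℝ) = ((u - v : ℤ) : ℝ) + ((v - u + a1 * v : ℤ) : ℝ) * lam := by
        rw [← hs]
        show (1 - lam) * _ = _
        push_cast
        linear_combination -(v : ℝ) * hlamsq
      rw [hspec r _ _ heq]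
      have : ((u - v) + (v - u + a1 * v) : ℤ) = a1 * v := by ring
      rw [this, ZMod.intCast_zmod_eq_zero_iff_dvd]
      exact Int.natAbs_dvd.mpr ⟨v, rfl⟩
    · intro h
      obtain ⟨x, y, hxy⟩ := r.2
      rw [hspec r x y hxy, ZMod.intCast_zmod_eq_zero_iff_dvd] at h
      obtain ⟨v, hv⟩ := Int.natAbs_dvd.mp h
      refine ⟨((x + v : ℤ) : ℝ) + (v : ℝ) * lam, ⟨x + v, v, by push_cast; ring⟩, ?_⟩
      show (1 - lam) * _ = (r : ℝ)
      rw [hxy]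
      have hvr : (x : ℝ) + y = a1 * v := by exact_mod_cast hv
      push_cast
      linear_combination -(v : ℝ) * hlamsq - lam * hvr
  rw [hker]
  exact ⟨QuotientAddGroup.quotientKerEquivOfSurjective φ hsurj⟩
end

section
/- Suppose 1 < λ < 2 is real and consider G = Γ ⋊ ⟨λ⟩ (Γ = ℤ[λ,λ⁻¹]) acting on ℝ by (c,μ)·t = μ(t+c). Then the subset M = {(c,1) : c ∈ Γ ∩ [0,1]} ∪ {(0,μ) : μ ∈ ⟨λ⟩ ∩ (0,1]} generates Γ ⋊ ⟨λ⟩ as a group. -/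
/-- `ℤ[λ, λ⁻¹]` as a subset of `ℝ`. -/
def steinRing (lam : ℝ) : Set ℝ := (Subring.closure {lam, lam⁻¹} : Subring ℝ)

/-- The group `Γ ⋊ ⟨λ⟩` realized as the group of permutations `t ↦ λⁿ(t + c)` of `ℝ`
(`c ∈ Γ = ℤ[λ,λ⁻¹]`, `n ∈ ℤ`), i.e. the subgroup of `Equiv.Perm ℝ` generated by these. -/
def steinPermGroup (lam : ℝ) : Subgroup (Equiv.Perm ℝ) :=
  Subgroup.closure {e : Equiv.Perm ℝ | ∃ c ∈ steinRing lam, ∃ n : ℤ,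
    ∀ t : ℝ, e t = lam ^ n * (t + c)}

/-- for `1 < λ < 2`, the set
`M = {(c,1) : c ∈ Γ ∩ [0,1]} ∪ {(0,μ) : μ ∈ ⟨λ⟩ ∩ (0,1]}` generates `Γ ⋊ ⟨λ⟩`
(with `Γ = ℤ[λ,λ⁻¹]`, realized as permutations `t ↦ μ(t+c)` of `ℝ`). -/
theorem stein_generating_set (lam : ℝ) (h1 : 1 < lam) (h2 : lam < 2) :
    Subgroup.closure
        {e : Equiv.Perm ℝ |
          (∃ c ∈ steinRing lam, c ∈ Set.Icc (0:ℝ) 1 ∧ ∀ t : ℝ, e t = t + c) ∨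
          (∃ n : ℤ, lam ^ n ∈ Set.Ioc (0:ℝ) 1 ∧ ∀ t : ℝ, e t = lam ^ n * t)} =
      steinPermGroup lam := by
  have hpos : (0:ℝ) < lam := lt_trans one_pos h1
  have hne : lam ≠ 0 := ne_of_gt hpos
  have zne : ∀ n : ℤ, lam ^ n ≠ 0 := fun n => ne_of_gt (zpow_pos hpos n)
  set Mset : Set (Equiv.Perm ℝ) :=
    {e : Equiv.Perm ℝ |
      (∃ c ∈ steinRing lam, c ∈ Set.Icc (0:ℝ) 1 ∧ ∀ t : ℝ, e t = t + c) ∨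
      (∃ n : ℤ, lam ^ n ∈ Set.Ioc (0:ℝ) 1 ∧ ∀ t : ℝ, e t = lam ^ n * t)} with hMset
  -- scalings lie in the closure of M
  have scale_mem : ∀ n : ℤ,
      Equiv.mulLeft₀ (lam ^ n) (zne n) ∈ Subgroup.closure Mset := by
    intro n
    rcases le_or_gt n 0 with hn | hn
    · exact Subgroup.subset_closure (Or.inr ⟨n,
        ⟨zpow_pos hpos n, zpow_le_one_of_nonpos₀ h1.le hn⟩, fun t => by simp⟩)
    · have he : Equiv.mulLeft₀ (lam ^ n) (zne n)
          = (Equiv.mulLeft₀ (lam ^ (-n)) (zne (-n)))⁻¹ := by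
        ext t
        simp [Equiv.Perm.inv_def, zpow_neg]
      rw [he]
      exact inv_mem (Subgroup.subset_closure (Or.inr ⟨-n,
        ⟨zpow_pos hpos _, zpow_le_one_of_nonpos₀ h1.le (by omega)⟩, fun t => by simp⟩))
  -- conjugation of a translation by a scaling
  have conj : ∀ (n : ℤ) (c : ℝ), Equiv.addRight (lam ^ n * c)
      = Equiv.mulLeft₀ (lam ^ n) (zne n) * Equiv.addRight c
        * (Equiv.mulLeft₀ (lam ^ n) (zne n))⁻¹ := by
    intro n c
    ext t
    simp only [Equiv.Perm.mul_apply, Equiv.Perm.inv_def, Equiv.coe_addRight,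
      Equiv.mulLeft₀_apply]
    simp only [Equiv.mulLeft₀_symm_apply]
    field_simp
  -- all translations by elements of Γ lie in the closure of M
  have trans_mem : ∀ c ∈ steinRing lam, Equiv.addRight c ∈ Subgroup.closure Mset := by
    have key : ∀ c ∈ steinRing lam, 0 ≤ c → Equiv.addRight c ∈ Subgroup.closure Mset := by
      intro c hc hc0
      obtain ⟨n, hn⟩ := pow_unbounded_of_one_lt c h1
      have hlinv : lam ^ (-(n:ℤ)) ∈ Subring.closure ({lam, lam⁻¹} : Set ℝ) := by
        have : lam ^ (-(n:ℤ)) = (lam⁻¹) ^ n := by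
          rw [zpow_neg, ← inv_zpow, zpow_natCast]
        rw [this]
        exact pow_mem (Subring.subset_closure (by simp)) n
      have hd : lam ^ (-(n:ℤ)) * c ∈ steinRing lam := by
        exact mul_mem hlinv hc
      have hpn : (0:ℝ) < lam ^ (-(n:ℤ)) := zpow_pos hpos _
      have hd0 : 0 ≤ lam ^ (-(n:ℤ)) * c := mul_nonneg hpn.le hc0
      have hd1 : lam ^ (-(n:ℤ)) * c ≤ 1 := by
        have hzn : lam ^ (-(n:ℤ)) = (lam ^ n)⁻¹ := by
          rw [zpow_neg, zpow_natCast]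
        rw [hzn]
        rw [inv_mul_le_iff₀ (pow_pos hpos n), mul_one]
        exact hn.le
      have hmem : Equiv.addRight (lam ^ (-(n:ℤ)) * c) ∈ Subgroup.closure Mset :=
        Subgroup.subset_closure (Or.inl ⟨_, hd, ⟨hd0, hd1⟩, fun t => by simp⟩)
      have hrw : c = lam ^ (n:ℤ) * (lam ^ (-(n:ℤ)) * c) := by
        rw [← mul_assoc, ← zpow_add₀ hne]
        simp
      rw [show Equiv.addRight c = Equiv.addRight (lam ^ (n:ℤ) * (lam ^ (-(n:ℤ)) * c)) by
        rw [← hrw]]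
      rw [conj]
      exact mul_mem (mul_mem (scale_mem _) hmem) (inv_mem (scale_mem _))
    intro c hc
    rcases le_total 0 c with h | h
    · exact key c hc h
    · have hmem := key (-c) (neg_mem hc) (by linarith)
      have he : Equiv.addRight c = (Equiv.addRight (-c))⁻¹ := by
        ext t
        simp [Equiv.Perm.inv_def, sub_eq_add_neg]
      rw [he]
      exact inv_mem hmem
  apply le_antisymm
  · rw [steinPermGroup]
    apply (Subgroup.closure_le _).mpr
    rintro e (⟨c, hc, _, he⟩ | ⟨n, _, he⟩)
    · exact Subgroup.subset_closure ⟨c, hc, 0, fun t => by simp [he t]⟩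
    · exact Subgroup.subset_closure ⟨0, by
        exact zero_mem (Subring.closure ({lam, lam⁻¹} : Set ℝ)), n, fun t => by simp [he t]⟩
  · rw [steinPermGroup]
    apply (Subgroup.closure_le _).mpr
    rintro e ⟨c, hc, n, he⟩
    have hdecomp : e = Equiv.mulLeft₀ (lam ^ n) (zne n) * Equiv.addRight c := by
      ext t
      rw [he]
      simp [Equiv.Perm.mul_apply]
    rw [hdecomp]
    exact mul_mem (scale_mem n) (trans_mem c hc)
end

section
/- Let n₁,...,n_k ≥ 2 be integers with k > 1. Consider the single-vertex k-graph Λ(n₁,...,n_k) with nᵢ loops a₀^{(nᵢ)},...,a_{nᵢ−1}^{(nᵢ)} of color i and commutation relations a_m^{(nᵢ)} a_l^{(nⱼ)} = a_{m'}^{(nⱼ)} a_{l'}^{(nᵢ)} iff m/nᵢ + l/(nᵢnⱼ) = m'/(nᵢnⱼ) + l'/nⱼ... Then the map φ₀ on finite paths sending a word (a_{l₁}^{(n_{i₁})},...,a_{l_m}^{(n_{i_m})}) to Σ_{j=1}^m l_j · Π_{s=1}^{j} (1/n_{i_s}) is well-defined on equivalence classes of words (respects the commutation relations) and is injective. -/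
/-
A word `(a_{l₁}^{(n_{i₁})}, …, a_{l_m}^{(n_{i_m})})` is read as the mixed-radix expansion
`0.l₁l₂…l_m` with radices `n_{i₁}, n_{i₂}, …`, so `φ₀(p w) = (l + φ₀ w) / nᵢ` for a first letter
`p = a_l^{(nᵢ)}`. Commuting two adjacent letters of colors `i ≠ j` is the identity
`m nⱼ + l = m' nᵢ + l'` between two ways of writing one digit in radix `nᵢnⱼ`, so it preserves `φ₀`.
Conversely, an adjacent pair of distinct colors can always be commuted (divide `m nⱼ + l` by `nᵢ`
with remainder), so any word can be brought to any prescribed order of its colors. For a fixed color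
sequence, `φ₀` of a valid word lies in `[0, 1)` and its first digit is `⌊nᵢ φ₀⌋`, so `φ₀` is
injective on valid words with a given color sequence, and hence on classes with given color counts.
-/
/-- The value `φ₀` of a word in the letters `a_l^{(n_i)}` (a letter is a pair `(i, l)` of a
color `i` and an index `l < nᵢ`): the word `(a_{l₁}^{(n_{i₁})},…,a_{l_m}^{(n_{i_m})})` is
sent to `Σ_{j=1}^m l_j · Π_{s=1}^j (1/n_{i_s})`. -/
def kgraphPhi0 {k : ℕ} (n : Fin k → ℕ) : List (Fin k × ℕ) → ℚ
  | [] => 0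
  | p :: w => (p.2 : ℚ) / (n p.1 : ℚ) + ((n p.1 : ℚ))⁻¹ * kgraphPhi0 n w

/-- A word is valid if every letter `(i, l)` satisfies `l < nᵢ`. -/
def kgraphValid {k : ℕ} (n : Fin k → ℕ) (w : List (Fin k × ℕ)) : Prop :=
  ∀ p ∈ w, p.2 < n p.1

/-- One elementary application of a commutation relation:
`a_m^{(nᵢ)} a_l^{(nⱼ)} ~ a_{m'}^{(nⱼ)} a_{l'}^{(nᵢ)}` (for `i ≠ j`) whenever
`m/nᵢ + l/(nᵢnⱼ) = m'/nⱼ + l'/(nᵢnⱼ)`. -/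
def kgraphStep {k : ℕ} (n : Fin k → ℕ) (w w' : List (Fin k × ℕ)) : Prop :=
  ∃ (w₁ w₂ : List (Fin k × ℕ)) (i j : Fin k) (m l m' l' : ℕ),
    i ≠ j ∧ m < n i ∧ l < n j ∧ m' < n j ∧ l' < n i ∧
    (m : ℚ) / (n i : ℚ) + (l : ℚ) / ((n i : ℚ) * (n j : ℚ)) =
      (m' : ℚ) / (n j : ℚ) + (l' : ℚ) / ((n i : ℚ) * (n j : ℚ)) ∧
    w = w₁ ++ [(i, m), (j, l)] ++ w₂ ∧ w' = w₁ ++ [(j, m'), (i, l')] ++ w₂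

open Relation

section
variable {k : ℕ} {n : Fin k → ℕ}

lemma kgraphPhi0_cons (p : Fin k × ℕ) (w : List (Fin k × ℕ)) :
    kgraphPhi0 n (p :: w) = (p.2 + kgraphPhi0 n w) / n p.1 := by
  rw [kgraphPhi0]
  ring

lemma kgraphPhi0_cons_cons (p q : Fin k × ℕ) (w : List (Fin k × ℕ)) :
    kgraphPhi0 n (p :: q :: w) =
      p.2 / n p.1 + q.2 / (n p.1 * n q.1) + kgraphPhi0 n w / (n p.1 * n q.1) := by
  rw [kgraphPhi0_cons, kgraphPhi0_cons]
  ring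

lemma kgraphPhi0_append_congr (u : List (Fin k × ℕ)) {v v' : List (Fin k × ℕ)}
    (h : kgraphPhi0 n v = kgraphPhi0 n v') : kgraphPhi0 n (u ++ v) = kgraphPhi0 n (u ++ v') := by
  induction u with
  | nil => exact h
  | cons p u ih => rw [List.cons_append, List.cons_append, kgraphPhi0_cons, kgraphPhi0_cons, ih]

lemma kgraphPhi0_eq_of_step {w w' : List (Fin k × ℕ)} (h : kgraphStep n w w') :
    kgraphPhi0 n w = kgraphPhi0 n w' := by
  obtain ⟨w₁, w₂, i, j, m, l, m', l', -, -, -, -, -, heq, rfl, rfl⟩ := h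
  simp only [List.append_assoc, List.cons_append, List.nil_append]
  refine kgraphPhi0_append_congr w₁ ?_
  rw [kgraphPhi0_cons_cons, kgraphPhi0_cons_cons, mul_comm (n j : ℚ)]
  exact congrArg (· + _) heq

lemma kgraphPhi0_eq_of_eqvGen {w w' : List (Fin k × ℕ)} (h : EqvGen (kgraphStep n) w w') :
    kgraphPhi0 n w = kgraphPhi0 n w' :=
  (Setoid.ker (kgraphPhi0 n)).iseqv.eqvGen_iff.mp (h.mono fun _ _ => kgraphPhi0_eq_of_step)

lemma kgraphValid_cons {p : Fin k × ℕ} {w : List (Fin k × ℕ)} :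
    kgraphValid n (p :: w) ↔ p.2 < n p.1 ∧ kgraphValid n w :=
  List.forall_mem_cons

lemma kgraphPhi0_nonneg (w : List (Fin k × ℕ)) : 0 ≤ kgraphPhi0 n w := by
  induction w with
  | nil => exact le_rfl
  | cons p w ih => rw [kgraphPhi0_cons]; positivity

lemma kgraphPhi0_lt_one {w : List (Fin k × ℕ)} (hw : kgraphValid n w) : kgraphPhi0 n w < 1 := by
  induction w with
  | nil => exact zero_lt_one
  | cons p w ih =>
    obtain ⟨hp, hw⟩ := kgraphValid_cons.mp hw
    have hp' : (p.2 : ℚ) + 1 ≤ n p.1 := by exact_mod_cast hp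
    rw [kgraphPhi0_cons, div_lt_one (by linarith [kgraphPhi0_nonneg (n := n) w])]
    linarith [ih hw]

lemma kgraphPhi0_cons_inj {i : Fin k} {l l' : ℕ} {w w' : List (Fin k × ℕ)}
    (hw : kgraphValid n ((i, l) :: w)) (hw' : kgraphValid n ((i, l') :: w'))
    (h : kgraphPhi0 n ((i, l) :: w) = kgraphPhi0 n ((i, l') :: w')) :
    l = l' ∧ kgraphPhi0 n w = kgraphPhi0 n w' := by
  obtain ⟨hl, hw⟩ := kgraphValid_cons.mp hw
  have hn : (n i : ℚ) ≠ 0 := Nat.cast_ne_zero.mpr (Nat.zero_lt_of_lt hl).ne'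
  have hsum : (l + kgraphPhi0 n w : ℚ) = l' + kgraphPhi0 n w' := by
    simpa only [kgraphPhi0_cons, div_left_inj' hn] using h
  have digit (d : ℕ) (v : List (Fin k × ℕ)) (hv : kgraphValid n v) :
      ⌊(kgraphPhi0 n v + d : ℚ)⌋₊ = d := by
    rw [Nat.floor_add_natCast (kgraphPhi0_nonneg v),
      Nat.floor_eq_zero.mpr (kgraphPhi0_lt_one hv), zero_add]
  have hll' : l = l' := by
    rw [← digit l w hw, ← digit l' w' (kgraphValid_cons.mp hw').2, add_comm, hsum, add_comm]
  subst hll'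
  exact ⟨rfl, add_left_cancel hsum⟩

lemma eq_of_map_fst_eq_of_kgraphPhi0_eq {w w' : List (Fin k × ℕ)}
    (hw : kgraphValid n w) (hw' : kgraphValid n w') (hc : w.map Prod.fst = w'.map Prod.fst)
    (h : kgraphPhi0 n w = kgraphPhi0 n w') : w = w' := by
  induction w generalizing w' with
  | nil => exact (List.map_eq_nil_iff.mp hc.symm).symm
  | cons p w ih =>
    obtain _ | ⟨p', w'⟩ := w'
    · cases hc
    simp only [List.map_cons, List.cons.injEq] at hc
    obtain ⟨hfst, hc⟩ := hc
    obtain ⟨i, l⟩ := p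
    obtain ⟨i', l'⟩ := p'
    obtain rfl : i = i' := hfst
    obtain ⟨rfl, htail⟩ := kgraphPhi0_cons_inj hw hw' h
    rw [ih (kgraphValid_cons.mp hw).2 (kgraphValid_cons.mp hw').2 hc htail]

lemma kgraphStep_cons (p : Fin k × ℕ) {w w' : List (Fin k × ℕ)} (h : kgraphStep n w w') :
    kgraphStep n (p :: w) (p :: w') := by
  obtain ⟨w₁, w₂, i, j, m, l, m', l', hij, hm, hl, hm', hl', heq, rfl, rfl⟩ := h
  exact ⟨p :: w₁, w₂, i, j, m, l, m', l', hij, hm, hl, hm', hl', heq, rfl, rfl⟩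

lemma eqvGen_kgraphStep_cons (p : Fin k × ℕ) {w w' : List (Fin k × ℕ)}
    (h : EqvGen (kgraphStep n) w w') : EqvGen (kgraphStep n) (p :: w) (p :: w') :=
  ((EqvGen.is_equivalence _).comap (List.cons p)).eqvGen_iff.mp
    (h.mono fun _ _ hs => .rel _ _ (kgraphStep_cons p hs))

lemma exists_kgraphStep_swap {i j : Fin k} (hij : i ≠ j) {m l : ℕ} (hm : m < n i) (hl : l < n j)
    (w : List (Fin k × ℕ)) :
    ∃ m' l', m' < n j ∧ l' < n i ∧
      kgraphStep n ((i, m) :: (j, l) :: w) ((j, m') :: (i, l') :: w) := by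
  have hi : 0 < n i := Nat.zero_lt_of_lt hm
  have hj : 0 < n j := Nat.zero_lt_of_lt hl
  obtain ⟨q, r, hr, hqr⟩ : ∃ q r, r < n i ∧ n i * q + r = m * n j + l :=
    ⟨_, _, Nat.mod_lt _ hi, Nat.div_add_mod _ _⟩
  have hq : q < n j := by nlinarith
  refine ⟨q, r, hq, hr, [], w, i, j, m, l, q, r, hij, hm, hl, hq, hr, ?_, rfl, rfl⟩
  have hqr' : (n i * q + r : ℚ) = m * n j + l := by exact_mod_cast hqr
  have hi' : (n i : ℚ) ≠ 0 := by positivity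
  have hj' : (n j : ℚ) ≠ 0 := by positivity
  field_simp
  exact hqr'.symm

lemma exists_eqvGen_kgraphStep_of_perm {c c' : List (Fin k)} (hc : c.Perm c')
    {w : List (Fin k × ℕ)} (hw : kgraphValid n w) (hwc : w.map Prod.fst = c') :
    ∃ v, kgraphValid n v ∧ v.map Prod.fst = c ∧ EqvGen (kgraphStep n) w v := by
  induction hc generalizing w with
  | nil => exact ⟨w, hw, hwc, .refl _⟩
  | cons a _ ih =>
    obtain _ | ⟨p, w⟩ := w
    · cases hwc
    simp only [List.map_cons, List.cons.injEq] at hwc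
    obtain ⟨rfl, hwc⟩ := hwc
    obtain ⟨hp, hw⟩ := kgraphValid_cons.mp hw
    obtain ⟨v, hv, hvc, hwv⟩ := ih hw hwc
    exact ⟨p :: v, kgraphValid_cons.mpr ⟨hp, hv⟩, by rw [List.map_cons, hvc],
      eqvGen_kgraphStep_cons p hwv⟩
  | swap a b c =>
    obtain _ | ⟨⟨i, m⟩, _ | ⟨⟨j, l⟩, w⟩⟩ := w
    · cases hwc
    · cases hwc
    simp only [List.map_cons, List.cons.injEq] at hwc
    obtain ⟨rfl, rfl, rfl⟩ := hwc
    obtain ⟨hm, hl, hwt⟩ : m < n i ∧ l < n j ∧ kgraphValid n w := by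
      simpa only [kgraphValid_cons] using hw
    by_cases hij : i = j
    · subst hij
      exact ⟨(i, m) :: (i, l) :: w, kgraphValid_cons.mpr ⟨hm, kgraphValid_cons.mpr ⟨hl, hwt⟩⟩,
        rfl, .refl _⟩
    obtain ⟨m', l', hm', hl', hs⟩ := exists_kgraphStep_swap hij hm hl w
    exact ⟨(j, m') :: (i, l') :: w, kgraphValid_cons.mpr ⟨hm', kgraphValid_cons.mpr ⟨hl', hwt⟩⟩,
      rfl, .rel _ _ hs⟩
  | trans _ _ ih₁ ih₂ =>
    obtain ⟨u, hu, huc, hwu⟩ := ih₂ hw hwc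
    obtain ⟨v, hv, hvc, huv⟩ := ih₁ hu huc
    exact ⟨v, hv, hvc, hwu.trans _ _ _ huv⟩

end

theorem kgraph_phi0_well_defined_injective_general (k : ℕ) (n : Fin k → ℕ) :
    (∀ w w' : List (Fin k × ℕ), Relation.EqvGen (kgraphStep n) w w' →
        kgraphPhi0 n w = kgraphPhi0 n w') ∧
    (∀ w w' : List (Fin k × ℕ), kgraphValid n w → kgraphValid n w' →
        (∀ i : Fin k, (w.map Prod.fst).count i = (w'.map Prod.fst).count i) →
        kgraphPhi0 n w = kgraphPhi0 n w' →
        Relation.EqvGen (kgraphStep n) w w') := by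
  refine ⟨fun _ _ => kgraphPhi0_eq_of_eqvGen, fun w w' hw hw' hcount hφ => ?_⟩
  obtain ⟨v, hv, hvc, hw'v⟩ :=
    exists_eqvGen_kgraphStep_of_perm (List.perm_iff_count.mpr hcount) hw' rfl
  obtain rfl : w = v :=
    eq_of_map_fst_eq_of_kgraphPhi0_eq hw hv hvc.symm (hφ.trans (kgraphPhi0_eq_of_eqvGen hw'v))
  exact hw'v.symm _ _

/-- for integers `n₁,…,n_k ≥ 2` (`k > 1`), the map `φ₀` on finite paths of the
single-vertex `k`-graph `Λ(n₁,…,n_k)` is well-defined on equivalence classes of words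
(it respects the commutation relations) and is injective: two valid words with the same
number of letters of each color and the same `φ₀`-value are equivalent. -/
theorem kgraph_phi0_well_defined_injective (k : ℕ) (hk : 1 < k) (n : Fin k → ℕ)
    (hn : ∀ i, 2 ≤ n i) :
    (∀ w w' : List (Fin k × ℕ), Relation.EqvGen (kgraphStep n) w w' →
        kgraphPhi0 n w = kgraphPhi0 n w') ∧
    (∀ w w' : List (Fin k × ℕ), kgraphValid n w → kgraphValid n w' →
        (∀ i : Fin k, (w.map Prod.fst).count i = (w'.map Prod.fst).count i) →
        kgraphPhi0 n w = kgraphPhi0 n w' →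
        Relation.EqvGen (kgraphStep n) w w') :=
  kgraph_phi0_well_defined_injective_general k n
end
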